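/- arXiv:1309.2005 — 3 statements merged into one kernel-verified Lean document; each statement's English description precedes it below -/
import Mathlib

section
/- Under the parabolic hypotheses, there are exactly (q^{2n}−1)/(q−1) tangent hyperplanes; moreover, every codimension-2 subspace meeting K in C₂ points is contained in exactly one tangent hyperplane, and every codimension-2 subspace meeting K in C₃ points is contained in exactly one tangent hyperplane. -/
open Module Finset

/-- geometric sum -/
private def gθ (q k : ℕ) : ℕ := ∑ i ∈ Finset.range k, q ^ i

private lemma gθ_succ (q k : ℕ) : q * gθ q k + 1 = gθ q (k+1) := by
  rw [gθ, gθ, geom_sum_succ]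

private lemma gθ_step (q k : ℕ) : gθ q (k+1) = gθ q k + q^k := Finset.sum_range_succ _ k

private lemma gθ_cast (q k : ℕ) : ((q:ℤ) - 1) * (gθ q k : ℤ) = (q:ℤ)^k - 1 := by
  have h := geom_sum_mul (q:ℤ) k
  rw [mul_comm] at h
  rw [← h, gθ]
  push_cast
  ring

private lemma aux_swap {α β : Type*} (s : Finset α) (t : Finset β) (r : α → β → Prop)
    [∀ a b, Decidable (r a b)] :
    ∑ a ∈ s, (t.filter (fun b => r a b)).card = ∑ b ∈ t, (s.filter (fun a => r a b)).card := by
  simp_rw [Finset.card_filter]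
  exact Finset.sum_comm

private lemma aux_split {α : Type*} (s : Finset α) (f : α → ℕ) (g : ℕ → ℕ)
    (h1 h2 h3 : ℕ) (h12 : h1 ≠ h2) (h13 : h1 ≠ h3) (h23 : h2 ≠ h3)
    (hcov : ∀ a ∈ s, f a = h1 ∨ f a = h2 ∨ f a = h3) :
    ∑ a ∈ s, g (f a)
      = (s.filter (fun a => f a = h1)).card * g h1
      + (s.filter (fun a => f a = h2)).card * g h2
      + (s.filter (fun a => f a = h3)).card * g h3 := by
  classical
  rw [← Finset.sum_filter_add_sum_filter_not s (fun a => f a = h1)]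
  have e1 : ∑ a ∈ s.filter (fun a => f a = h1), g (f a)
      = (s.filter (fun a => f a = h1)).card * g h1 := by
    rw [Finset.sum_congr rfl (fun a ha => by rw [(Finset.mem_filter.1 ha).2]),
      Finset.sum_const, smul_eq_mul]
  rw [e1, ← Finset.sum_filter_add_sum_filter_not (s.filter (fun a => ¬ f a = h1))
    (fun a => f a = h2)]
  have hs2 : (s.filter (fun a => ¬ f a = h1)).filter (fun a => f a = h2)
      = s.filter (fun a => f a = h2) := by
    rw [Finset.filter_filter]
    apply Finset.filter_congr
    intro a _
    constructor
    · tauto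
    · intro h; exact ⟨by rw [h]; exact fun hc => h12 hc.symm, h⟩
  have hs3 : (s.filter (fun a => ¬ f a = h1)).filter (fun a => ¬ f a = h2)
      = s.filter (fun a => f a = h3) := by
    rw [Finset.filter_filter]
    apply Finset.filter_congr
    intro a ha
    constructor
    · rintro ⟨hn1, hn2⟩
      rcases hcov a ha with h | h | h
      · exact absurd h hn1
      · exact absurd h hn2
      · exact h
    · intro h
      exact ⟨by rw [h]; exact fun hc => h13 hc.symm, by rw [h]; exact fun hc => h23 hc.symm⟩
  have e2 : ∑ a ∈ (s.filter (fun a => ¬ f a = h1)).filter (fun a => f a = h2), g (f a)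
      = (s.filter (fun a => f a = h2)).card * g h2 := by
    rw [hs2, Finset.sum_congr rfl (fun a ha => by rw [(Finset.mem_filter.1 ha).2]),
      Finset.sum_const, smul_eq_mul]
  have e3 : ∑ a ∈ (s.filter (fun a => ¬ f a = h1)).filter (fun a => ¬ f a = h2), g (f a)
      = (s.filter (fun a => f a = h3)).card * g h3 := by
    rw [hs3, Finset.sum_congr rfl (fun a ha => by rw [(Finset.mem_filter.1 ha).2]),
      Finset.sum_const, smul_eq_mul]
  rw [e2, e3, add_assoc]

private lemma aux_sup_rank {F V : Type*} [Field F] [AddCommGroup V] [Module F V]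
    [FiniteDimensional F V] (S P : Submodule F V) (hP : Module.finrank F P = 1)
    (h : ¬ P ≤ S) : Module.finrank F ↥(S ⊔ P) = Module.finrank F S + 1 := by
  have hsum := Submodule.finrank_sup_add_finrank_inf_eq S P
  have hinfle : Module.finrank F ↥(S ⊓ P) ≤ 1 := hP ▸ Submodule.finrank_mono inf_le_right
  have hinf : Module.finrank F ↥(S ⊓ P) = 0 := by
    by_contra hne
    have h1 : Module.finrank F ↥(S ⊓ P) = 1 := by omega
    have : S ⊓ P = P := Submodule.eq_of_le_of_finrank_eq inf_le_right (by rw [h1, hP])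
    exact h (this ▸ inf_le_left)
  omega

section Aux
variable {F : Type*} [Field F] [Fintype F] {V : Type*} [AddCommGroup V] [Module F V]
  [Fintype V] [DecidableEq V]

/-- number of 1-dim subspaces inside a subspace `A`. -/
lemma aux_lines (A : Submodule F V) :
    (Fintype.card F - 1) * {P : Submodule F V | finrank F P = 1 ∧ P ≤ A}.ncard
      = Fintype.card F ^ finrank F A - 1 := by
  classical
  set q := Fintype.card F with hq
  haveI : Fintype (Submodule F V) := Fintype.ofFinite _
  set s : Finset (Submodule F V) := univ.filter (fun P => finrank F P = 1 ∧ P ≤ A) with hs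
  have hncard : {P : Submodule F V | finrank F P = 1 ∧ P ≤ A}.ncard = s.card := by
    rw [Set.ncard_eq_toFinset_card', Set.toFinset_setOf]
  set t : Finset V := univ.filter (fun u => u ∈ A ∧ u ≠ 0) with ht
  have htcard : t.card = q ^ finrank F A - 1 := by
    have h1 : t = (A : Set V).toFinset.erase 0 := by
      ext u
      simp [ht, and_comm, Set.mem_toFinset]
    rw [h1, Finset.card_erase_of_mem (by simp [Set.mem_toFinset])]
    rw [Set.toFinset_card]
    congr 1
    exact card_eq_pow_finrank (K := F) (V := A)
  have hfib : ∀ u ∈ t, Submodule.span F {u} ∈ s := by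
    intro u hu
    simp only [ht, mem_filter, mem_univ, true_and] at hu
    simp only [hs, mem_filter, mem_univ, true_and]
    exact ⟨finrank_span_singleton hu.2, Submodule.span_le.2 (by simpa using hu.1)⟩
  have key := Finset.card_eq_sum_card_fiberwise hfib
  have hfibcard : ∀ P ∈ s, (t.filter (fun u => Submodule.span F {u} = P)).card = q - 1 := by
    intro P hP
    simp only [hs, mem_filter, mem_univ, true_and] at hP
    have h1 : t.filter (fun u => Submodule.span F {u} = P) = (P : Set V).toFinset.erase 0 := by
      ext u
      simp only [mem_filter, ht, mem_univ, true_and, Finset.mem_erase, Set.mem_toFinset,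
        SetLike.mem_coe]
      constructor
      · rintro ⟨⟨_, hu0⟩, hsp⟩
        exact ⟨hu0, hsp ▸ Submodule.mem_span_singleton_self u⟩
      · rintro ⟨hu0, huP⟩
        have hle : Submodule.span F {u} ≤ P := Submodule.span_le.2 (by simpa using huP)
        have : Submodule.span F {u} = P :=
          Submodule.eq_of_le_of_finrank_eq hle (by rw [finrank_span_singleton hu0, hP.1])
        exact ⟨⟨hP.2 huP, hu0⟩, this⟩
    rw [h1, Finset.card_erase_of_mem (by simp [Set.mem_toFinset]), Set.toFinset_card]
    congr 1
    have hc := card_eq_pow_finrank (K := F) (V := P)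
    rw [hP.1, pow_one] at hc
    exact hc
  rw [Finset.sum_congr rfl hfibcard, Finset.sum_const, smul_eq_mul] at key
  rw [hncard, ← htcard, key, mul_comm]
end Aux

section Aux2
variable {F : Type*} [Field F] [Fintype F] {V : Type*} [AddCommGroup V] [Module F V]
  [Fintype V] [DecidableEq V]

lemma aux_hyperplanes (S : Submodule F V) (h0 : 0 < finrank F V) :
    (Fintype.card F - 1) *
        {W : Submodule F V | finrank F W = finrank F V - 1 ∧ S ≤ W}.ncard
      = Fintype.card F ^ (finrank F V - finrank F S) - 1 := by
  classical
  haveI : Finite (Module.Dual F V) :=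
    Finite.of_injective _ (DFunLike.coe_injective (F := Module.Dual F V))
  haveI : Fintype (Module.Dual F V) := Fintype.ofFinite _
  haveI : DecidableEq (Module.Dual F V) := Classical.decEq _
  set d := finrank F V with hd
  -- the annihilator of S has rank d - finrank S
  have hrank : ∀ T : Submodule F V, finrank F T.dualAnnihilator = d - finrank F T := by
    intro T
    have h1 : finrank F (V ⧸ T) = finrank F T.dualAnnihilator :=
      LinearEquiv.finrank_eq (Subspace.quotEquivAnnihilator (K := F) (V := V) T)
    have h2 := Submodule.finrank_quotient_add_finrank T
    omega
  have hinj : Function.Injective (fun W : Submodule F V => W.dualAnnihilator) := by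
    intro W₁ W₂ h
    simp only at h
    rw [← Subspace.dualAnnihilator_dualCoannihilator_eq (W := W₁),
      ← Subspace.dualAnnihilator_dualCoannihilator_eq (W := W₂), h]
  have himg : (fun W : Submodule F V => W.dualAnnihilator) ''
        {W : Submodule F V | finrank F W = d - 1 ∧ S ≤ W}
      = {P : Submodule F (Module.Dual F V) | finrank F P = 1 ∧ P ≤ S.dualAnnihilator} := by
    ext P
    constructor
    · rintro ⟨W, ⟨hW1, hW2⟩, rfl⟩
      refine ⟨by rw [hrank, hW1]; omega, ?_⟩
      intro φ hφ
      rw [Submodule.mem_dualAnnihilator] at hφ ⊢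
      exact fun v hv => hφ v (hW2 hv)
    · rintro ⟨hP1, hP2⟩
      refine ⟨P.dualCoannihilator, ⟨?_, ?_⟩, Subspace.dualCoannihilator_dualAnnihilator_eq⟩
      · have := Subspace.finrank_add_finrank_dualCoannihilator_eq P
        omega
      · intro v hv
        rw [Submodule.mem_dualCoannihilator]
        intro φ hφ
        exact (Submodule.mem_dualAnnihilator φ).1 (hP2 hφ) v hv
  have hncards : {W : Submodule F V | finrank F W = d - 1 ∧ S ≤ W}.ncard
      = {P : Submodule F (Module.Dual F V) | finrank F P = 1 ∧ P ≤ S.dualAnnihilator}.ncard := by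
    rw [← himg, Set.ncard_image_of_injective _ hinj]
  rw [hncards]
  have := aux_lines (F := F) S.dualAnnihilator
  rwa [hrank S] at this

/-- clean form: the number of hyperplanes containing `S` is the geometric sum. -/
lemma aux_hyperplanes' (S : Submodule F V) (h0 : 0 < finrank F V) (hq : 1 < Fintype.card F) :
    {W : Submodule F V | finrank F W = finrank F V - 1 ∧ S ≤ W}.ncard
      = ∑ i ∈ range (finrank F V - finrank F S), Fintype.card F ^ i := by
  set q := Fintype.card F
  have key := aux_hyperplanes S h0
  have hgeom : (q - 1) * ∑ i ∈ range (finrank F V - finrank F S), q ^ i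
      = q ^ (finrank F V - finrank F S) - 1 := by
    set k := finrank F V - finrank F S
    have hz : ((q:ℤ) - 1) * ∑ i ∈ range k, (q:ℤ) ^ i = (q:ℤ)^k - 1 := by
      rw [mul_comm]; exact geom_sum_mul (q:ℤ) k
    have h1 : (1:ℕ) ≤ q ^ k := Nat.one_le_pow _ _ (by omega)
    zify [Nat.sub_le, h1, show 1 ≤ q by omega]
    push_cast at hz ⊢
    linarith [hz]
  rw [← hgeom] at key
  exact Nat.eq_of_mul_eq_mul_left (by omega) key
end Aux2
set_option maxHeartbeats 1000000 in
theorem stmt_17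
    (q n : ℕ) (hq : 2 < q) (hn : 2 ≤ n)
    (F : Type*) [Field F] [Fintype F] (hF : Fintype.card F = q)
    (K : Set (Submodule F (Fin (2 * n + 1) → F)))
    (hK : ∀ P ∈ K, Module.finrank F P = 1)
    (H₁ H₂ H₃ C₁ C₂ C₃ : ℕ)
    (hH₁ : (H₁ : ℤ) = ((q : ℤ) ^ n - 1) * ((q : ℤ) ^ (n - 1) + 1) / ((q : ℤ) - 1))
    (hH₂ : (H₂ : ℤ) = ((q : ℤ) ^ n + 1) * ((q : ℤ) ^ (n - 1) - 1) / ((q : ℤ) - 1))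
    (hH₃ : (H₃ : ℤ) = 1 + (q : ℤ) * ((q : ℤ) ^ (2 * n - 2) - 1) / ((q : ℤ) - 1))
    (hC₁ : (C₁ : ℤ) = ((q : ℤ) ^ (2 * n - 2) - 1) / ((q : ℤ) - 1))
    (hC₂ : (C₂ : ℤ) = 1 + (q : ℤ) * (((q : ℤ) ^ (n - 1) - 1) * ((q : ℤ) ^ (n - 2) + 1)) / ((q : ℤ) - 1))
    (hC₃ : (C₃ : ℤ) = 1 + (q : ℤ) * (((q : ℤ) ^ (n - 1) + 1) * ((q : ℤ) ^ (n - 2) - 1)) / ((q : ℤ) - 1))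
    (hhyp : ∀ W : Submodule F (Fin (2 * n + 1) → F), Module.finrank F W = 2 * n →
      {P | P ∈ K ∧ P ≤ W}.ncard = H₁ ∨ {P | P ∈ K ∧ P ≤ W}.ncard = H₂ ∨
      {P | P ∈ K ∧ P ≤ W}.ncard = H₃)
    (hcod2 : ∀ W : Submodule F (Fin (2 * n + 1) → F), Module.finrank F W = 2 * n - 1 →
      {P | P ∈ K ∧ P ≤ W}.ncard = C₁ ∨ {P | P ∈ K ∧ P ≤ W}.ncard = C₂ ∨
      {P | P ∈ K ∧ P ≤ W}.ncard = C₃)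
    (hcard : (K.ncard : ℤ) = ((q : ℤ) ^ (2 * n) - 1) / ((q : ℤ) - 1))
    :
    (({W : Submodule F (Fin (2 * n + 1) → F) | Module.finrank F W = 2 * n ∧ {P | P ∈ K ∧ P ≤ W}.ncard = H₃}.ncard : ℤ)) = ((q : ℤ) ^ (2 * n) - 1) / ((q : ℤ) - 1) ∧
    (∀ S : Submodule F (Fin (2 * n + 1) → F), Module.finrank F S = 2 * n - 1 →
      ({P | P ∈ K ∧ P ≤ S}.ncard = C₂ → {W : Submodule F (Fin (2 * n + 1) → F) | Module.finrank F W = 2 * n ∧ S ≤ W ∧ {P | P ∈ K ∧ P ≤ W}.ncard = H₃}.ncard = 1) ∧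
      ({P | P ∈ K ∧ P ≤ S}.ncard = C₃ → {W : Submodule F (Fin (2 * n + 1) → F) | Module.finrank F W = 2 * n ∧ S ≤ W ∧ {P | P ∈ K ∧ P ≤ W}.ncard = H₃}.ncard = 1)) := by
  classical
  obtain ⟨m, rfl⟩ : ∃ m, n = m + 2 := ⟨n - 2, by omega⟩
  clear hC₁ hn
  -- basic integer facts
  have hq1 : ((q:ℤ) - 1) ≠ 0 := by
    have : (2:ℤ) < (q:ℤ) := by exact_mod_cast hq
    omega
  have hx3 : (3:ℤ) ≤ (q:ℤ) := by exact_mod_cast hq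
  have hdiv : ∀ z : ℤ, (((q:ℤ) - 1) * z) / ((q:ℤ) - 1) = z :=
    fun z => Int.mul_ediv_cancel_left z hq1
  -- θ abbreviations (ℤ)
  set T2 : ℤ := (gθ q (2*m+2) : ℤ) with hT2
  set T3 : ℤ := (gθ q (2*m+3) : ℤ) with hT3
  set T4 : ℤ := (gθ q (2*m+4) : ℤ) with hT4
  set T5 : ℤ := (gθ q (2*m+5) : ℤ) with hT5
  set Y : ℤ := (q:ℤ)^(m+1) with hY
  have hYpos : 0 < Y := by positivity
  have hy0 : Y ≠ 0 := ne_of_gt hYpos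
  have r2 : ((q:ℤ) - 1) * T2 = (q:ℤ)^(2*m+2) - 1 := gθ_cast q _
  have r3 : ((q:ℤ) - 1) * T3 = (q:ℤ)^(2*m+3) - 1 := gθ_cast q _
  have r4 : ((q:ℤ) - 1) * T4 = (q:ℤ)^(2*m+4) - 1 := gθ_cast q _
  have r5 : ((q:ℤ) - 1) * T5 = (q:ℤ)^(2*m+5) - 1 := gθ_cast q _
  have hm2 : (q:ℤ) * T2 + 1 = T3 := by
    have h := gθ_succ q (2*m+2)
    rw [show 2*m+2+1 = 2*m+3 from by omega] at h
    have h' : (q:ℤ) * (gθ q (2*m+2) : ℤ) + 1 = (gθ q (2*m+3) : ℤ) := by exact_mod_cast h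
    rw [hT2, hT3]; exact h'
  have hm3 : (q:ℤ) * T3 + 1 = T4 := by
    have h := gθ_succ q (2*m+3)
    rw [show 2*m+3+1 = 2*m+4 from by omega] at h
    have h' : (q:ℤ) * (gθ q (2*m+3) : ℤ) + 1 = (gθ q (2*m+4) : ℤ) := by exact_mod_cast h
    rw [hT3, hT4]; exact h'
  have hm4 : (q:ℤ) * T4 + 1 = T5 := by
    have h := gθ_succ q (2*m+4)
    rw [show 2*m+4+1 = 2*m+5 from by omega] at h
    have h' : (q:ℤ) * (gθ q (2*m+4) : ℤ) + 1 = (gθ q (2*m+5) : ℤ) := by exact_mod_cast h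
    rw [hT4, hT5]; exact h'
  have hd3 : T3 = T2 + Y*Y := by
    have h := gθ_step q (2*m+2)
    rw [show 2*m+2+1 = 2*m+3 from by omega] at h
    have h' : (gθ q (2*m+3) : ℤ) = (gθ q (2*m+2) : ℤ) + (q:ℤ)^(2*m+2) := by exact_mod_cast h
    rw [hT2, hT3, h', hY]; ring
  have hd4 : T4 = T3 + Y*Y*(q:ℤ) := by
    have h := gθ_step q (2*m+3)
    rw [show 2*m+3+1 = 2*m+4 from by omega] at h
    have h' : (gθ q (2*m+4) : ℤ) = (gθ q (2*m+3) : ℤ) + (q:ℤ)^(2*m+3) := by exact_mod_cast h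
    rw [hT3, hT4, h', hY]; ring
  have hd5 : T5 = T4 + Y*Y*(q:ℤ)*(q:ℤ) := by
    have h := gθ_step q (2*m+4)
    rw [show 2*m+4+1 = 2*m+5 from by omega] at h
    have h' : (gθ q (2*m+5) : ℤ) = (gθ q (2*m+4) : ℤ) + (q:ℤ)^(2*m+4) := by exact_mod_cast h
    rw [hT4, hT5, h', hY]; ring
  -- values of the parameters
  have hH1z : (H₁ : ℤ) = T3 + Y := by
    rw [hH₁, show (m+2) - 1 = m+1 from rfl,
      show ((q:ℤ)^(m+2) - 1) * ((q:ℤ)^(m+1) + 1) = ((q:ℤ) - 1) * (T3 + Y) from by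
        rw [hY]; linear_combination -r3,
      hdiv]
  have hH2z : (H₂ : ℤ) = T3 - Y := by
    rw [hH₂, show (m+2) - 1 = m+1 from rfl,
      show ((q:ℤ)^(m+2) + 1) * ((q:ℤ)^(m+1) - 1) = ((q:ℤ) - 1) * (T3 - Y) from by
        rw [hY]; linear_combination -r3,
      hdiv]
  have hH3z : (H₃ : ℤ) = T3 := by
    rw [hH₃, show 2*(m+2) - 2 = 2*m+2 from by omega,
      show (q:ℤ) * ((q:ℤ)^(2*m+2) - 1) = ((q:ℤ) - 1) * ((q:ℤ) * T2) from by
        linear_combination -(q:ℤ) * r2,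
      hdiv]
    linear_combination hm2
  have hC2z : (C₂ : ℤ) = T2 + Y := by
    have r2' : ((q:ℤ) - 1) * ((gθ q (2*m+1) : ℕ) : ℤ) = (q:ℤ)^(2*m+1) - 1 := gθ_cast q _
    have hm1 : (q:ℤ) * ((gθ q (2*m+1) : ℕ) : ℤ) + 1 = T2 := by
      have h := gθ_succ q (2*m+1)
      rw [show 2*m+1+1 = 2*m+2 from by omega] at h
      have h' : (q:ℤ) * (gθ q (2*m+1) : ℤ) + 1 = (gθ q (2*m+2) : ℤ) := by exact_mod_cast h
      rw [hT2]; exact h'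
    rw [hC₂, show (m+2) - 1 = m+1 from rfl, show (m+2) - 2 = m from rfl,
      show (q:ℤ) * (((q:ℤ)^(m+1) - 1) * ((q:ℤ)^m + 1))
          = ((q:ℤ) - 1) * ((q:ℤ) * (((gθ q (2*m+1) : ℕ) : ℤ) + (q:ℤ)^m)) from by
        linear_combination -(q:ℤ) * r2',
      hdiv, hY]
    linear_combination hm1
  have hC3z : (C₃ : ℤ) = T2 - Y := by
    have r2' : ((q:ℤ) - 1) * ((gθ q (2*m+1) : ℕ) : ℤ) = (q:ℤ)^(2*m+1) - 1 := gθ_cast q _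
    have hm1 : (q:ℤ) * ((gθ q (2*m+1) : ℕ) : ℤ) + 1 = T2 := by
      have h := gθ_succ q (2*m+1)
      rw [show 2*m+1+1 = 2*m+2 from by omega] at h
      have h' : (q:ℤ) * (gθ q (2*m+1) : ℤ) + 1 = (gθ q (2*m+2) : ℤ) := by exact_mod_cast h
      rw [hT2]; exact h'
    rw [hC₃, show (m+2) - 1 = m+1 from rfl, show (m+2) - 2 = m from rfl,
      show (q:ℤ) * (((q:ℤ)^(m+1) + 1) * ((q:ℤ)^m - 1))
          = ((q:ℤ) - 1) * ((q:ℤ) * (((gθ q (2*m+1) : ℕ) : ℤ) - (q:ℤ)^m)) from by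
        linear_combination -(q:ℤ) * r2',
      hdiv, hY]
    linear_combination hm1
  have hT4div : ((q:ℤ) ^ (2 * (m+2)) - 1) / ((q:ℤ) - 1) = T4 := by
    rw [show (q:ℤ)^(2*(m+2)) = (q:ℤ)^(2*m+4) from by ring, ← r4, hdiv]
  have hKz : (K.ncard : ℤ) = T4 := by rw [hcard, hT4div]
  -- distinctness of H values
  have hH12 : H₁ ≠ H₂ := by
    intro h
    have : (H₁:ℤ) = (H₂:ℤ) := by exact_mod_cast h
    rw [hH1z, hH2z] at this; omega
  have hH13 : H₁ ≠ H₃ := by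
    intro h
    have : (H₁:ℤ) = (H₃:ℤ) := by exact_mod_cast h
    rw [hH1z, hH3z] at this; omega
  have hH23 : H₂ ≠ H₃ := by
    intro h
    have : (H₂:ℤ) = (H₃:ℤ) := by exact_mod_cast h
    rw [hH2z, hH3z] at this; omega
  -- geometry setup
  haveI : Fintype (Submodule F (Fin (2*(m+2)+1) → F)) := Fintype.ofFinite _
  have hVdim : finrank F (Fin (2*(m+2)+1) → F) = 2*(m+2)+1 := by simp
  have hcount : ∀ S : Submodule F (Fin (2*(m+2)+1) → F),
      {W : Submodule F (Fin (2*(m+2)+1) → F) | finrank F ↥W = 2*(m+2) ∧ S ≤ W}.ncard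
        = gθ q (2*(m+2)+1 - finrank F ↥S) := by
    intro S
    have h := aux_hyperplanes' (F := F) (V := Fin (2*(m+2)+1) → F) S
      (by rw [hVdim]; omega) (by rw [hF]; omega)
    rw [hVdim, hF] at h
    simp only [Nat.add_sub_cancel] at h
    rw [gθ]
    exact h
  have hcountF : ∀ (S : Submodule F (Fin (2*(m+2)+1) → F))
      (t : Finset (Submodule F (Fin (2*(m+2)+1) → F))),
      (∀ W, W ∈ t ↔ (finrank F ↥W = 2*(m+2) ∧ S ≤ W)) →
      t.card = gθ q (2*(m+2)+1 - finrank F ↥S) := by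
    intro S t ht
    have h := hcount S
    rw [Set.ncard_eq_toFinset_card', Set.toFinset_setOf] at h
    rw [← h]
    congr 1
    ext W
    simp [ht W]
  set KF : Finset (Submodule F (Fin (2*(m+2)+1) → F)) := univ.filter (· ∈ K) with hKF
  have hcntW : ∀ W : Submodule F (Fin (2*(m+2)+1) → F),
      {P | P ∈ K ∧ P ≤ W}.ncard = (KF.filter (fun P => P ≤ W)).card := by
    intro W
    rw [Set.ncard_eq_toFinset_card', Set.toFinset_setOf]
    congr 1
    ext P
    simp [hKF]
  have hKFcard : KF.card = K.ncard := by
    rw [Set.ncard_eq_toFinset_card']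
    congr 1
    ext P
    simp [hKF, Set.mem_toFinset]
  have hK1 : ∀ P ∈ KF, finrank F ↥P = 1 := by
    intro P hP
    exact hK P (by simpa [hKF] using hP)
  set Hall : Finset (Submodule F (Fin (2*(m+2)+1) → F)) :=
    univ.filter (fun W => finrank F ↥W = 2*(m+2)) with hHall
  have hmemHall : ∀ W, W ∈ Hall ↔ finrank F ↥W = 2*(m+2) := by
    intro W; simp [hHall]
  have hHallcard : Hall.card = gθ q (2*m+5) := by
    have h := hcountF ⊥ Hall (fun W => by simp [hmemHall W, bot_le])
    rw [finrank_bot] at h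
    rw [h]
    congr 1 <;> omega
  have hPoint : ∀ P ∈ KF, (Hall.filter (fun W => P ≤ W)).card = gθ q (2*m+4) := by
    intro P hP
    have h := hcountF P (Hall.filter (fun W => P ≤ W))
      (fun W => by simp [hmemHall W, Finset.mem_filter])
    rw [hK1 P hP] at h
    rw [h]
    congr 1 <;> omega
  have hPair : ∀ P P' : Submodule F (Fin (2*(m+2)+1) → F), P ∈ KF → P' ∈ KF → P ≠ P' →
      (Hall.filter (fun W => P ≤ W ∧ P' ≤ W)).card = gθ q (2*m+3) := by
    intro P P' hP hP' hne
    have hnle : ¬ P' ≤ P := by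
      intro hle
      exact hne (Submodule.eq_of_le_of_finrank_eq hle (by rw [hK1 P hP, hK1 P' hP'])).symm
    have hsup : finrank F ↥(P ⊔ P') = 2 := by
      rw [aux_sup_rank P P' (hK1 P' hP') hnle, hK1 P hP]
    have h := hcountF (P ⊔ P') (Hall.filter (fun W => P ≤ W ∧ P' ≤ W))
      (fun W => by simp [hmemHall W, Finset.mem_filter, sup_le_iff])
    rw [hsup] at h
    rw [h]
    congr 1 <;> omega
  have E2 : ∑ W ∈ Hall, (KF.filter (fun P => P ≤ W)).card = KF.card * gθ q (2*m+4) := by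
    rw [aux_swap Hall KF (fun W P => P ≤ W), Finset.sum_congr rfl hPoint,
      Finset.sum_const, smul_eq_mul]
  have E3 : ∑ W ∈ Hall, ((KF.filter (fun P => P ≤ W)).card * (KF.filter (fun P => P ≤ W)).card
        - (KF.filter (fun P => P ≤ W)).card)
      = (KF.card * KF.card - KF.card) * gθ q (2*m+3) := by
    have h1 : ∀ W : Submodule F (Fin (2*(m+2)+1) → F),
        (KF.filter (fun P => P ≤ W)).offDiag
          = KF.offDiag.filter (fun pp => pp.1 ≤ W ∧ pp.2 ≤ W) := by
      intro W
      ext ⟨P, P'⟩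
      simp only [Finset.mem_offDiag, Finset.mem_filter]
      tauto
    calc ∑ W ∈ Hall, ((KF.filter (fun P => P ≤ W)).card * (KF.filter (fun P => P ≤ W)).card
        - (KF.filter (fun P => P ≤ W)).card)
        = ∑ W ∈ Hall, (KF.filter (fun P => P ≤ W)).offDiag.card := by
          refine Finset.sum_congr rfl fun W _ => ?_
          rw [Finset.offDiag_card]
      _ = ∑ W ∈ Hall, (KF.offDiag.filter (fun pp => pp.1 ≤ W ∧ pp.2 ≤ W)).card := by
          refine Finset.sum_congr rfl fun W _ => by rw [h1]
      _ = ∑ pp ∈ KF.offDiag, (Hall.filter (fun W => pp.1 ≤ W ∧ pp.2 ≤ W)).card :=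
          aux_swap Hall KF.offDiag (fun W pp => pp.1 ≤ W ∧ pp.2 ≤ W)
      _ = ∑ _pp ∈ KF.offDiag, gθ q (2*m+3) := by
          refine Finset.sum_congr rfl fun pp hpp => ?_
          rw [Finset.mem_offDiag] at hpp
          exact hPair pp.1 pp.2 hpp.1 hpp.2.1 hpp.2.2
      _ = (KF.card * KF.card - KF.card) * gθ q (2*m+3) := by
          rw [Finset.sum_const, smul_eq_mul, Finset.offDiag_card]
  -- classes of hyperplanes
  have hcov : ∀ W ∈ Hall, (KF.filter (fun P => P ≤ W)).card = H₁ ∨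
      (KF.filter (fun P => P ≤ W)).card = H₂ ∨ (KF.filter (fun P => P ≤ W)).card = H₃ := by
    intro W hW
    have := hhyp W ((hmemHall W).1 hW)
    rwa [hcntW W] at this
  set a1 : ℕ := (Hall.filter (fun W => (KF.filter (fun P => P ≤ W)).card = H₁)).card with ha1
  set a2 : ℕ := (Hall.filter (fun W => (KF.filter (fun P => P ≤ W)).card = H₂)).card with ha2
  set a3 : ℕ := (Hall.filter (fun W => (KF.filter (fun P => P ≤ W)).card = H₃)).card with ha3
  have hKFz : ((KF.card : ℕ) : ℤ) = T4 := by rw [hKFcard]; exact hKz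
  have hcc : ∀ c : ℕ, ((c * c - c : ℕ) : ℤ) = (c:ℤ)*(c:ℤ) - (c:ℤ) := by
    intro c
    rcases Nat.eq_zero_or_pos c with h | h
    · subst h; simp
    · have h1 : c ≤ c * c := Nat.le_mul_of_pos_left c h
      rw [Nat.cast_sub h1]
      push_cast
      ring
  have z1 : (a1:ℤ) + (a2:ℤ) + (a3:ℤ) = T5 := by
    have h := aux_split Hall (fun W => (KF.filter (fun P => P ≤ W)).card) (fun _ => 1)
      H₁ H₂ H₃ hH12 hH13 hH23 hcov
    simp only [Finset.sum_const, smul_eq_mul, mul_one] at h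
    rw [hHallcard, ← ha1, ← ha2, ← ha3] at h
    rw [hT5]
    exact_mod_cast h.symm
  have z2 : (a1:ℤ)*(T3+Y) + (a2:ℤ)*(T3-Y) + (a3:ℤ)*T3 = T4*T4 := by
    have h := aux_split Hall (fun W => (KF.filter (fun P => P ≤ W)).card) (fun c => c)
      H₁ H₂ H₃ hH12 hH13 hH23 hcov
    rw [E2, ← ha1, ← ha2, ← ha3] at h
    have hz := congrArg (fun x : ℕ => (x:ℤ)) h
    push_cast at hz
    rw [hH1z, hH2z, hH3z, hKFz, ← hT4] at hz
    linear_combination -hz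
  have z3 : (a1:ℤ)*((T3+Y)*(T3+Y)-(T3+Y)) + (a2:ℤ)*((T3-Y)*(T3-Y)-(T3-Y))
      + (a3:ℤ)*(T3*T3-T3) = (T4*T4-T4)*T3 := by
    have h := aux_split Hall (fun W => (KF.filter (fun P => P ≤ W)).card) (fun c => c*c - c)
      H₁ H₂ H₃ hH12 hH13 hH23 hcov
    rw [E3, ← ha1, ← ha2, ← ha3] at h
    have hz := congrArg (fun x : ℕ => (x:ℤ)) h
    push_cast [hcc] at hz
    rw [hH1z, hH2z, hH3z, hKFz, ← hT3] at hz
    linear_combination -hz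
  have key3 : (a3:ℤ) = T4 := by
    refine mul_left_cancel₀ (mul_ne_zero hy0 hy0) ?_
    linear_combination (-1 : ℤ)*z3 + (2*T3-1)*z2 - (T3*T3-Y*Y)*z1
      + (T4 - T3 - T3*T4 + Y*Y - (q:ℤ)*Y*Y)*hm3 + (T3*T3 - Y*Y)*hm4
      + (-1 + T3 - (q:ℤ)*T3)*hd4
  constructor
  · -- global count
    rw [hT4div]
    have hset : {W : Submodule F (Fin (2*(m+2)+1) → F) |
        finrank F ↥W = 2*(m+2) ∧ {P | P ∈ K ∧ P ≤ W}.ncard = H₃}.ncard = a3 := by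
      rw [Set.ncard_eq_toFinset_card', Set.toFinset_setOf, ha3]
      congr 1
      ext W
      simp only [Finset.mem_filter, Finset.mem_univ, true_and, hmemHall, hcntW]
    rw [hset]
    exact key3
  · -- local part
    intro S hS
    have hθ2z : ((gθ q 2 : ℕ) : ℤ) = 1 + (q:ℤ) := by
      rw [gθ]
      simp [Finset.sum_range_succ]
    set HS : Finset (Submodule F (Fin (2*(m+2)+1) → F)) :=
      Hall.filter (fun W => S ≤ W) with hHS
    have hmemHS : ∀ W, W ∈ HS ↔ (finrank F ↥W = 2*(m+2) ∧ S ≤ W) := by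
      intro W
      simp [hHS, hmemHall, Finset.mem_filter]
    have hHScard : HS.card = gθ q 2 := by
      have h := hcountF S HS hmemHS
      rw [hS] at h
      rw [h]
      congr 1 <;> omega
    have hcovS : ∀ W ∈ HS, (KF.filter (fun P => P ≤ W)).card = H₁ ∨
        (KF.filter (fun P => P ≤ W)).card = H₂ ∨ (KF.filter (fun P => P ≤ W)).card = H₃ := by
      intro W hW
      exact hcov W (Finset.mem_of_mem_filter W (hHS ▸ hW))
    have hsum : ∑ W ∈ HS, (KF.filter (fun P => P ≤ W)).card
        = (KF.filter (fun P => P ≤ S)).card * gθ q 2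
          + (KF.filter (fun P => ¬ P ≤ S)).card := by
      rw [aux_swap HS KF (fun W P => P ≤ W),
        ← Finset.sum_filter_add_sum_filter_not KF (fun P => P ≤ S)]
      congr 1
      · refine (Finset.sum_congr rfl fun P hP => ?_).trans
          (by rw [Finset.sum_const, smul_eq_mul])
        have hPS : P ≤ S := (Finset.mem_filter.1 hP).2
        have heq : HS.filter (fun W => P ≤ W) = HS :=
          Finset.filter_true_of_mem (fun W hW => le_trans hPS ((hmemHS W).1 hW).2)
        rw [heq, hHScard]
      · refine (Finset.sum_congr rfl fun P hP => ?_).trans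
          (by rw [Finset.sum_const, smul_eq_mul, mul_one])
        have hP1 := Finset.mem_filter.1 hP
        have hPK : P ∈ KF := hP1.1
        have hnle : ¬ P ≤ S := hP1.2
        have hsup : finrank F ↥(S ⊔ P) = 2*(m+2) := by
          rw [aux_sup_rank S P (hK1 P hPK) hnle, hS]
          omega
        have h := hcountF (S ⊔ P) (HS.filter (fun W => P ≤ W))
          (fun W => by
            simp only [Finset.mem_filter, hmemHS W, sup_le_iff]
            tauto)
        rw [hsup] at h
        rw [h, show 2*(m+2)+1 - 2*(m+2) = 1 from by omega]
        simp [gθ]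
    have hPSsplit : (KF.filter (fun P => P ≤ S)).card
        + (KF.filter (fun P => ¬ P ≤ S)).card = KF.card :=
      Finset.card_filter_add_card_filter_not _
    set b1 : ℕ := (HS.filter (fun W => (KF.filter (fun P => P ≤ W)).card = H₁)).card with hb1
    set b2 : ℕ := (HS.filter (fun W => (KF.filter (fun P => P ≤ W)).card = H₂)).card with hb2
    set b3 : ℕ := (HS.filter (fun W => (KF.filter (fun P => P ≤ W)).card = H₃)).card with hb3
    have zb1 : (b1:ℤ) + (b2:ℤ) + (b3:ℤ) = 1 + (q:ℤ) := by
      have h := aux_split HS (fun W => (KF.filter (fun P => P ≤ W)).card) (fun _ => 1)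
        H₁ H₂ H₃ hH12 hH13 hH23 hcovS
      simp only [Finset.sum_const, smul_eq_mul, mul_one] at h
      rw [hHScard, ← hb1, ← hb2, ← hb3] at h
      rw [← hθ2z]
      exact_mod_cast h.symm
    have zb2 : (b1:ℤ)*(T3+Y) + (b2:ℤ)*(T3-Y) + (b3:ℤ)*T3
        = T4 + (q:ℤ)*((KF.filter (fun P => P ≤ S)).card : ℤ) := by
      have h := aux_split HS (fun W => (KF.filter (fun P => P ≤ W)).card) (fun c => c)
        H₁ H₂ H₃ hH12 hH13 hH23 hcovS
      rw [hsum, ← hb1, ← hb2, ← hb3] at h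
      have hz := congrArg (fun x : ℕ => (x:ℤ)) h
      push_cast at hz
      rw [hH1z, hH2z, hH3z, hθ2z] at hz
      have hz2 := congrArg (fun x : ℕ => (x:ℤ)) hPSsplit
      push_cast at hz2
      rw [hKFz] at hz2
      linear_combination -hz + hz2
    have hgoalset : {W : Submodule F (Fin (2*(m+2)+1) → F) |
        finrank F ↥W = 2*(m+2) ∧ S ≤ W ∧ {P | P ∈ K ∧ P ≤ W}.ncard = H₃}.ncard = b3 := by
      rw [Set.ncard_eq_toFinset_card', Set.toFinset_setOf, hb3]
      congr 1
      ext W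
      simp only [Finset.mem_filter, Finset.mem_univ, true_and, hmemHS, hcntW]
      tauto
    constructor
    · intro hc2
      have hcs : (((KF.filter (fun P => P ≤ S)).card : ℕ) : ℤ) = T2 + Y := by
        have : (KF.filter (fun P => P ≤ S)).card = C₂ := by rw [← hcntW S, hc2]
        rw [this, hC2z]
      rw [hcs] at zb2
      have hbb : (b1:ℤ) - (b2:ℤ) = (q:ℤ) := by
        refine mul_left_cancel₀ hy0 ?_
        linear_combination zb2 - T3*zb1 - hm3 + hm2
      rw [hgoalset]
      omega
    · intro hc3
      have hcs : (((KF.filter (fun P => P ≤ S)).card : ℕ) : ℤ) = T2 - Y := by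
        have : (KF.filter (fun P => P ≤ S)).card = C₃ := by rw [← hcntW S, hc3]
        rw [this, hC3z]
      rw [hcs] at zb2
      have hbb : (b1:ℤ) - (b2:ℤ) = -(q:ℤ) := by
        refine mul_left_cancel₀ hy0 ?_
        linear_combination zb2 - T3*zb1 - hm3 + hm2
      rw [hgoalset]
      omega
end

section
/- Under the parabolic hypotheses (together with |K| = (q^{2n}−1)/(q−1)), for every codimension-2 subspace meeting K in C₁ points, the number of hyperplanes of type H₁ containing it equals the number of hyperplanes of type H₂ containing it. -/
set_option maxHeartbeats 1000000

open Module Finset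

theorem aux_sup' {F V : Type*} [Field F] [AddCommGroup V] [Module F V] [FiniteDimensional F V]
    (S P : Submodule F V) (hP : finrank F P = 1) (hPS : ¬ P ≤ S) :
    finrank F ↥(S ⊔ P) = finrank F S + 1 := by
  have h := Submodule.finrank_sup_add_finrank_inf_eq S P
  have hlt : S ⊓ P < P := lt_of_le_of_ne inf_le_right
    (fun hEq => hPS (inf_eq_right.mp hEq))
  have h0 : finrank F ↥(S ⊓ P) < 1 := hP ▸ Submodule.finrank_lt_finrank_of_lt hlt
  omega

theorem stmt_18
    (q n : ℕ) (hq : 2 < q) (hn : 2 ≤ n)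
    (F : Type*) [Field F] [Fintype F] (hF : Fintype.card F = q)
    (K : Set (Submodule F (Fin (2 * n + 1) → F)))
    (hK : ∀ P ∈ K, Module.finrank F P = 1)
    (H₁ H₂ H₃ C₁ C₂ C₃ : ℕ)
    (hH₁ : (H₁ : ℤ) = ((q : ℤ) ^ n - 1) * ((q : ℤ) ^ (n - 1) + 1) / ((q : ℤ) - 1))
    (hH₂ : (H₂ : ℤ) = ((q : ℤ) ^ n + 1) * ((q : ℤ) ^ (n - 1) - 1) / ((q : ℤ) - 1))
    (hH₃ : (H₃ : ℤ) = 1 + (q : ℤ) * ((q : ℤ) ^ (2 * n - 2) - 1) / ((q : ℤ) - 1))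
    (hC₁ : (C₁ : ℤ) = ((q : ℤ) ^ (2 * n - 2) - 1) / ((q : ℤ) - 1))
    (hC₂ : (C₂ : ℤ) = 1 + (q : ℤ) * (((q : ℤ) ^ (n - 1) - 1) * ((q : ℤ) ^ (n - 2) + 1)) / ((q : ℤ) - 1))
    (hC₃ : (C₃ : ℤ) = 1 + (q : ℤ) * (((q : ℤ) ^ (n - 1) + 1) * ((q : ℤ) ^ (n - 2) - 1)) / ((q : ℤ) - 1))
    (hhyp : ∀ W : Submodule F (Fin (2 * n + 1) → F), Module.finrank F W = 2 * n →
      {P | P ∈ K ∧ P ≤ W}.ncard = H₁ ∨ {P | P ∈ K ∧ P ≤ W}.ncard = H₂ ∨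
      {P | P ∈ K ∧ P ≤ W}.ncard = H₃)
    (hcod2 : ∀ W : Submodule F (Fin (2 * n + 1) → F), Module.finrank F W = 2 * n - 1 →
      {P | P ∈ K ∧ P ≤ W}.ncard = C₁ ∨ {P | P ∈ K ∧ P ≤ W}.ncard = C₂ ∨
      {P | P ∈ K ∧ P ≤ W}.ncard = C₃)
    (hcard : (K.ncard : ℤ) = ((q : ℤ) ^ (2 * n) - 1) / ((q : ℤ) - 1))
    :
    ∀ S : Submodule F (Fin (2 * n + 1) → F), Module.finrank F S = 2 * n - 1 →
      {P | P ∈ K ∧ P ≤ S}.ncard = C₁ →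
      {W : Submodule F (Fin (2 * n + 1) → F) | Module.finrank F W = 2 * n ∧ S ≤ W ∧ {P | P ∈ K ∧ P ≤ W}.ncard = H₁}.ncard = {W : Submodule F (Fin (2 * n + 1) → F) | Module.finrank F W = 2 * n ∧ S ≤ W ∧ {P | P ∈ K ∧ P ≤ W}.ncard = H₂}.ncard := by
  obtain ⟨m, rfl⟩ : ∃ m, n = m + 2 := ⟨n - 2, by omega⟩
  intro S hS hSC
  classical
  clear hcod2 hC₂ hC₃ hn
  -- integer value identities
  set e : ℤ := (q : ℤ) with he
  have he3 : (3 : ℤ) ≤ e := by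
    have : 3 ≤ q := hq
    rw [he]; exact_mod_cast this
  have hd : ∀ k : ℕ, (e - 1) ∣ (e ^ k - 1) := fun k => by
    simpa using sub_dvd_pow_sub_pow e 1 k
  have vH₁ : (H₁ : ℤ) * (e - 1) = (e ^ (m + 2) - 1) * (e ^ (m + 1) + 1) := by
    rw [hH₁, show m + 2 - 1 = m + 1 from rfl]
    rw [Int.ediv_mul_cancel (Dvd.dvd.mul_right (hd (m + 2)) _)]
  have vH₂ : (H₂ : ℤ) * (e - 1) = (e ^ (m + 2) + 1) * (e ^ (m + 1) - 1) := by
    rw [hH₂, show m + 2 - 1 = m + 1 from rfl]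
    rw [Int.ediv_mul_cancel (by
      have : (e ^ (m + 2) + 1) * (e ^ (m + 1) - 1)
          = (e ^ (m + 1) - 1) * (e ^ (m + 2) + 1) := by ring
      rw [this]; exact Dvd.dvd.mul_right (hd (m + 1)) _)]
  have h2m2 : 2 * (m + 2) - 2 = 2 * m + 2 := by omega
  have vH₃ : (H₃ : ℤ) * (e - 1) = (e - 1) + e * (e ^ (2 * m + 2) - 1) := by
    rw [hH₃, h2m2, add_mul, one_mul,
      Int.ediv_mul_cancel (Dvd.dvd.mul_left (hd (2 * m + 2)) _)]
  have vC₁ : (C₁ : ℤ) * (e - 1) = e ^ (2 * m + 2) - 1 := by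
    rw [hC₁, h2m2, Int.ediv_mul_cancel (hd (2 * m + 2))]
  have vK : (K.ncard : ℤ) * (e - 1) = e ^ (2 * m + 4) - 1 := by
    rw [hcard, show 2 * (m + 2) = 2 * m + 4 from by omega,
      Int.ediv_mul_cancel (hd (2 * m + 4))]
  have hH12 : H₁ ≠ H₂ := by
    intro h
    have : ((H₁ : ℤ)) * (e - 1) = ((H₂ : ℤ)) * (e - 1) := by rw [h]
    rw [vH₁, vH₂] at this
    have h0 : 2 * (e ^ (m + 1) * (e - 1)) = 0 := by linear_combination this
    have hp : (0 : ℤ) < e ^ (m + 1) := pow_pos (by linarith) _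
    nlinarith
  -- finiteness setup
  haveI : Finite (Submodule F (Fin (2 * (m + 2) + 1) → F)) :=
    Finite.of_injective _ (SetLike.coe_injective (A := Submodule F (Fin (2 * (m + 2) + 1) → F)))
  haveI : Fintype (Submodule F (Fin (2 * (m + 2) + 1) → F)) := Fintype.ofFinite _
  have hVdim : finrank F (Fin (2 * (m + 2) + 1) → F) = 2 * m + 5 := by
    simp [Module.finrank_pi]; ring
  have hcardV : Fintype.card (Fin (2 * (m + 2) + 1) → F) = q ^ (2 * m + 5) := by
    rw [card_eq_pow_finrank (K := F), hF, hVdim]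
  have hcardW : ∀ W : Submodule F (Fin (2 * (m + 2) + 1) → F),
      (univ.filter (fun v => v ∈ W)).card = q ^ (finrank F W) := by
    intro W
    rw [← Fintype.card_subtype]
    rw [card_eq_pow_finrank (K := F) (V := ↥W), hF]
  have hS' : finrank F S = 2 * m + 3 := by omega
  set T : Finset (Submodule F (Fin (2 * (m + 2) + 1) → F)) :=
    univ.filter (fun W => finrank F W = 2 * (m + 2) ∧ S ≤ W) with hT
  have hsup : ∀ P : Submodule F (Fin (2 * (m + 2) + 1) → F), finrank F P = 1 → ¬ P ≤ S →
      (S ⊔ P) ∈ T := by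
    intro P hP hPS
    simp only [hT, mem_filter, mem_univ, true_and]
    exact ⟨by rw [aux_sup' S P hP hPS, hS']; ring, le_sup_left⟩
  have huniq : ∀ W ∈ T, ∀ P : Submodule F (Fin (2 * (m + 2) + 1) → F),
      finrank F P = 1 → ¬ P ≤ S → (P ≤ W ↔ S ⊔ P = W) := by
    intro W hW P hP hPS
    simp only [hT, mem_filter, mem_univ, true_and] at hW
    constructor
    · intro hPW
      refine Submodule.eq_of_le_of_finrank_eq (sup_le hW.2 hPW) ?_
      rw [aux_sup' S P hP hPS, hS', hW.1]; ring
    · intro h; rw [← h]; exact le_sup_right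
  -- count |T|
  have hTcount : T.card * q ^ (2 * m + 4) + q ^ (2 * m + 3)
      = q ^ (2 * m + 5) + T.card * q ^ (2 * m + 3) := by
    have hfib := Finset.card_eq_sum_card_fiberwise
      (f := fun v : (Fin (2 * (m + 2) + 1) → F) => S ⊔ (Submodule.span F {v}))
      (s := univ.filter (fun v => v ∉ S)) (t := T) ?goodmap
    case goodmap =>
      intro v hv
      simp only [Finset.mem_coe, mem_filter, mem_univ, true_and] at hv
      have hv0 : v ≠ 0 := fun h => hv (h ▸ S.zero_mem)
      exact hsup _ (finrank_span_singleton hv0) (by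
        intro hle; exact hv (hle (Submodule.mem_span_singleton_self v)))
    have hfibeq : ∀ W ∈ T, ((univ.filter (fun v => v ∉ S)).filter
        (fun v => S ⊔ (Submodule.span F {v}) = W)).card + q ^ (2 * m + 3)
        = q ^ (2 * m + 4) := by
      intro W hW
      have hWT := hW
      simp only [hT, mem_filter, mem_univ, true_and] at hWT
      have hset : (univ.filter (fun v => v ∉ S)).filter
          (fun v => S ⊔ (Submodule.span F {v}) = W)
          = (univ.filter (fun v => v ∈ W)) \ (univ.filter (fun v => v ∈ S)) := by
        ext v
        simp only [mem_filter, mem_univ, true_and, mem_sdiff]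
        constructor
        · rintro ⟨hvS, hEq⟩
          refine ⟨?_, hvS⟩
          rw [← hEq]
          exact Submodule.mem_sup_right (Submodule.mem_span_singleton_self v)
        · rintro ⟨hvW, hvS⟩
          have hv0 : v ≠ 0 := fun h => hvS (h ▸ S.zero_mem)
          refine ⟨hvS, ?_⟩
          exact (huniq W hW _ (finrank_span_singleton hv0)
            (fun hle => hvS (hle (Submodule.mem_span_singleton_self v)))).mp
            ((Submodule.span_singleton_le_iff_mem v W).mpr hvW)
      rw [hset, card_sdiff_of_subset (by
        intro v hv; simp only [mem_filter, mem_univ, true_and] at hv ⊢; exact hWT.2 hv)]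
      have h1 := hcardW W
      have h2 := hcardW S
      rw [hWT.1] at h1
      rw [hS'] at h2
      have h1' : (univ.filter (fun v => v ∈ W)).card = q ^ (2 * m + 4) := by
        rw [h1]; ring
      rw [h1', h2]
      have hle : q ^ (2 * m + 3) ≤ q ^ (2 * m + 4) :=
        Nat.pow_le_pow_right (by omega) (by omega)
      have hsub : (univ.filter (fun v => v ∈ S)).card ≤ (univ.filter (fun v => v ∈ W)).card := by
        apply Finset.card_le_card
        intro v hv; simp only [mem_filter, mem_univ, true_and] at hv ⊢; exact hWT.2 hv
      omega
    have houter : (univ.filter (fun v : (Fin (2 * (m + 2) + 1) → F) => v ∉ S)).card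
        + q ^ (2 * m + 3) = q ^ (2 * m + 5) := by
      have := Finset.card_filter_add_card_filter_not
        (s := (univ : Finset (Fin (2 * (m + 2) + 1) → F))) (p := fun v => v ∈ S)
      rw [Finset.card_univ, hcardV] at this
      have h2 := hcardW S; rw [hS'] at h2
      omega
    have hsum : ∑ W ∈ T, (((univ.filter (fun v => v ∉ S)).filter
        (fun v => S ⊔ (Submodule.span F {v}) = W)).card + q ^ (2 * m + 3))
        = T.card * q ^ (2 * m + 4) := by
      rw [Finset.sum_congr rfl hfibeq, Finset.sum_const, smul_eq_mul]
    rw [Finset.sum_add_distrib, ← hfib, Finset.sum_const, smul_eq_mul] at hsum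
    omega
  -- K as a finset
  have hKf : K.Finite := Set.toFinite K
  set KT : Finset (Submodule F (Fin (2 * (m + 2) + 1) → F)) := hKf.toFinset with hKT
  have hg : ∀ W : Submodule F (Fin (2 * (m + 2) + 1) → F),
      {P | P ∈ K ∧ P ≤ W}.ncard = (KT.filter (fun P => P ≤ W)).card := by
    intro W
    rw [show {P | P ∈ K ∧ P ≤ W} = ↑(KT.filter (fun P => P ≤ W)) from by
      ext P
      simp only [Set.mem_setOf_eq, Finset.mem_coe, Finset.mem_filter, hKT,
        Set.Finite.mem_toFinset]]
    exact Set.ncard_coe_finset _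
  have hKcard : KT.card = K.ncard := (Set.ncard_eq_toFinset_card K hKf).symm
  have hCS : (KT.filter (fun P => P ≤ S)).card = C₁ := by
    rw [← hg S]; exact hSC
  -- split for W ∈ T
  have hsplit : ∀ W ∈ T, (KT.filter (fun P => P ≤ W)).card
      = C₁ + (KT.filter (fun P => P ≤ W ∧ ¬ P ≤ S)).card := by
    intro W hW
    have hWT := hW
    simp only [hT, mem_filter, mem_univ, true_and] at hWT
    have h := Finset.card_filter_add_card_filter_not
      (s := KT.filter (fun P => P ≤ W)) (p := fun P => P ≤ S)
    rw [Finset.filter_filter, Finset.filter_filter] at h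
    have h1 : (KT.filter (fun P => P ≤ W ∧ P ≤ S)) = KT.filter (fun P => P ≤ S) := by
      ext P; simp only [mem_filter]
      exact ⟨fun ⟨h1, _, h3⟩ => ⟨h1, h3⟩, fun ⟨h1, h2⟩ => ⟨h1, h2.trans hWT.2, h2⟩⟩
    rw [h1, hCS] at h
    omega
  -- fiberwise count of K off S
  have hKfib : ∑ W ∈ T, (KT.filter (fun P => P ≤ W ∧ ¬ P ≤ S)).card
      = (KT.filter (fun P => ¬ P ≤ S)).card := by
    have hfib := Finset.card_eq_sum_card_fiberwise
      (f := fun P : Submodule F (Fin (2 * (m + 2) + 1) → F) => S ⊔ P)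
      (s := KT.filter (fun P => ¬ P ≤ S)) (t := T) ?goodmap2
    case goodmap2 =>
      intro P hP
      simp only [Finset.mem_coe, mem_filter, hKT, Set.Finite.mem_toFinset] at hP
      exact hsup P (hK P hP.1) hP.2
    rw [hfib]
    apply Finset.sum_congr rfl
    intro W hW
    congr 1
    ext P
    constructor
    · intro hP
      obtain ⟨hPK', hPW, hPS⟩ := Finset.mem_filter.mp hP
      have hPK : P ∈ K := hKf.mem_toFinset.mp hPK'
      exact Finset.mem_filter.mpr ⟨Finset.mem_filter.mpr ⟨hPK', hPS⟩,
        (huniq W hW P (hK P hPK) hPS).mp hPW⟩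
    · intro hP
      obtain ⟨hPs, hEq⟩ := Finset.mem_filter.mp hP
      obtain ⟨hPK', hPS⟩ := Finset.mem_filter.mp hPs
      have hPK : P ∈ K := hKf.mem_toFinset.mp hPK'
      exact Finset.mem_filter.mpr ⟨hPK', (huniq W hW P (hK P hPK) hPS).mpr hEq, hPS⟩
  -- total split of K
  have hKsplit : C₁ + (KT.filter (fun P => ¬ P ≤ S)).card = K.ncard := by
    have h := Finset.card_filter_add_card_filter_not
      (s := KT) (p := fun P => P ≤ S)
    rw [hCS, hKcard] at h
    exact h
  -- sum of g over T
  have hEsum : ∑ W ∈ T, (KT.filter (fun P => P ≤ W)).card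
      = T.card * C₁ + (KT.filter (fun P => ¬ P ≤ S)).card := by
    rw [Finset.sum_congr rfl hsplit, Finset.sum_add_distrib, Finset.sum_const,
      smul_eq_mul, hKfib]
  -- type partition
  set X : Submodule F (Fin (2 * (m + 2) + 1) → F) → ℕ :=
    fun W => (KT.filter (fun P => P ≤ W)).card with hX
  set a := (T.filter (fun W => X W = H₁)).card with ha
  set b := (T.filter (fun W => X W = H₂)).card with hb
  set c := ((T.filter (fun W => ¬ X W = H₁)).filter (fun W => ¬ X W = H₂)).card with hc
  have hbeq : (T.filter (fun W => ¬ X W = H₁)).filter (fun W => X W = H₂)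
      = T.filter (fun W => X W = H₂) := by
    ext W
    simp only [mem_filter]
    exact ⟨fun ⟨⟨h1, _⟩, h3⟩ => ⟨h1, h3⟩, fun ⟨h1, h2⟩ => ⟨⟨h1, h2 ▸ hH12.symm⟩, h2⟩⟩
  have habc : a + b + c = T.card := by
    have h1 := Finset.card_filter_add_card_filter_not
      (s := T) (p := fun W => X W = H₁)
    have h2 := Finset.card_filter_add_card_filter_not
      (s := T.filter (fun W => ¬ X W = H₁)) (p := fun W => X W = H₂)
    rw [hbeq] at h2
    omega
  have hsumtypes : ∑ W ∈ T, X W = a * H₁ + b * H₂ + c * H₃ := by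
    rw [← Finset.sum_filter_add_sum_filter_not T (fun W => X W = H₁) X,
      ← Finset.sum_filter_add_sum_filter_not
        (T.filter (fun W => ¬ X W = H₁)) (fun W => X W = H₂) X, hbeq]
    have e1 : ∑ W ∈ T.filter (fun W => X W = H₁), X W = a * H₁ := by
      rw [Finset.sum_congr rfl (fun W hW => (Finset.mem_filter.mp hW).2),
        Finset.sum_const, smul_eq_mul]
    have e2 : ∑ W ∈ T.filter (fun W => X W = H₂), X W = b * H₂ := by
      rw [Finset.sum_congr rfl (fun W hW => (Finset.mem_filter.mp hW).2),
        Finset.sum_const, smul_eq_mul]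
    have e3 : ∑ W ∈ (T.filter (fun W => ¬ X W = H₁)).filter (fun W => ¬ X W = H₂), X W
        = c * H₃ := by
      have hcst : ∀ W ∈ (T.filter (fun W => ¬ X W = H₁)).filter (fun W => ¬ X W = H₂),
          X W = H₃ := by
        intro W hW
        simp only [mem_filter] at hW
        obtain ⟨⟨hWT, hn1⟩, hn2⟩ := hW
        simp only [hT, mem_filter, mem_univ, true_and] at hWT
        have h3 := hhyp W hWT.1
        have hXW : X W = (KT.filter (fun P => P ≤ W)).card := rfl
        rw [hg W, ← hXW] at h3
        tauto
      rw [Finset.sum_congr rfl hcst, Finset.sum_const, smul_eq_mul]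
    rw [e1, e2, e3]; ring
  -- goal rewriting
  have hgoalL : {W : Submodule F (Fin (2 * (m + 2) + 1) → F) |
      Module.finrank F W = 2 * (m + 2) ∧ S ≤ W ∧ {P | P ∈ K ∧ P ≤ W}.ncard = H₁}.ncard = a := by
    have hseteq : {W : Submodule F (Fin (2 * (m + 2) + 1) → F) |
        Module.finrank F W = 2 * (m + 2) ∧ S ≤ W ∧ {P | P ∈ K ∧ P ≤ W}.ncard = H₁}
        = ↑(T.filter (fun W => X W = H₁)) := by
      ext W
      have hXW : X W = (KT.filter (fun P => P ≤ W)).card := rfl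
      simp only [Set.mem_setOf_eq, Finset.mem_coe, Finset.mem_filter, hT, mem_univ, true_and]
      rw [hg W, ← hXW]
      tauto
    rw [hseteq, Set.ncard_coe_finset]
  have hgoalR : {W : Submodule F (Fin (2 * (m + 2) + 1) → F) |
      Module.finrank F W = 2 * (m + 2) ∧ S ≤ W ∧ {P | P ∈ K ∧ P ≤ W}.ncard = H₂}.ncard = b := by
    have hseteq : {W : Submodule F (Fin (2 * (m + 2) + 1) → F) |
        Module.finrank F W = 2 * (m + 2) ∧ S ≤ W ∧ {P | P ∈ K ∧ P ≤ W}.ncard = H₂}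
        = ↑(T.filter (fun W => X W = H₂)) := by
      ext W
      have hXW : X W = (KT.filter (fun P => P ≤ W)).card := rfl
      simp only [Set.mem_setOf_eq, Finset.mem_coe, Finset.mem_filter, hT, mem_univ, true_and]
      rw [hg W, ← hXW]
      tauto
    rw [hseteq, Set.ncard_coe_finset]
  rw [hgoalL, hgoalR]
  -- final integer arithmetic
  have hTc : (T.card : ℤ) = e + 1 := by
    have hcast : (T.card : ℤ) * e ^ (2 * m + 4) + e ^ (2 * m + 3)
        = e ^ (2 * m + 5) + (T.card : ℤ) * e ^ (2 * m + 3) := by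
      rw [he]; exact_mod_cast hTcount
    have h1 : ((T.card : ℤ) - (e + 1)) * (e ^ (2 * m + 3) * (e - 1)) = 0 := by
      linear_combination hcast
    rcases mul_eq_zero.mp h1 with h | h
    · linarith
    · rcases mul_eq_zero.mp h with h | h
      · exact absurd h (pow_ne_zero _ (by omega))
      · exfalso; omega
  have hE2nat : a * H₁ + b * H₂ + c * H₃ + C₁ = T.card * C₁ + K.ncard := by
    rw [← hsumtypes, hEsum, ← hKsplit]
    ring
  have hE2 : (a : ℤ) * H₁ + (b : ℤ) * H₂ + (c : ℤ) * H₃ + C₁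
      = (T.card : ℤ) * C₁ + (K.ncard : ℤ) := by exact_mod_cast hE2nat
  have hE1 : (a : ℤ) + b + c = e + 1 := by
    rw [← hTc]; exact_mod_cast habc
  have A2 : (a : ℤ) * ((e ^ (m + 2) - 1) * (e ^ (m + 1) + 1))
      + (b : ℤ) * ((e ^ (m + 2) + 1) * (e ^ (m + 1) - 1))
      + (c : ℤ) * ((e - 1) + e * (e ^ (2 * m + 2) - 1))
      + (e ^ (2 * m + 2) - 1)
      = (e + 1) * (e ^ (2 * m + 2) - 1) + (e ^ (2 * m + 4) - 1) := by
    linear_combination (e - 1) * hE2 - (a : ℤ) * vH₁ - (b : ℤ) * vH₂ - (c : ℤ) * vH₃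
      - vC₁ + vK + ((C₁ : ℤ) * (e - 1)) * hTc + (e + 1) * vC₁
  have hfinal : ((a : ℤ) - b) * (e ^ (m + 1) * (e - 1)) = 0 := by
    linear_combination A2 - ((e - 1) + e * (e ^ (2 * m + 2) - 1)) * hE1
  have hab : (a : ℤ) = b := by
    rcases mul_eq_zero.mp hfinal with h | h
    · linarith
    · rcases mul_eq_zero.mp h with h | h
      · exact absurd h (pow_ne_zero _ (by omega))
      · exfalso; omega
  exact_mod_cast hab
end

section
/- Under the parabolic hypotheses (together with |K| = (q^{2n}−1)/(q−1)), every codimension-3 subspace γ of PG(2n,q) that is contained in at least one hyperplane of type H₁ satisfies |γ ∩ K| = N·q^{n−2} + (q^{n−1}+1)(q^{n−2}−1)/(q−1) for some N ∈ {0, 1, 2, q+1}. -/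
open Module Submodule

set_option linter.unusedSectionVars false
set_option linter.unusedVariables false
set_option maxHeartbeats 1600000

attribute [local instance] Classical.propDecidable

noncomputable instance submoduleFintypeAux {F V : Type*} [Field F] [AddCommGroup V]
    [Module F V] [Finite V] : Fintype (Submodule F V) :=
  have : Finite (Submodule F V) := Finite.of_injective _ SetLike.coe_injective
  Fintype.ofFinite _

section helpers
variable {F V : Type*} [Field F] [Fintype F] [AddCommGroup V] [Module F V]
  [Fintype V] [FiniteDimensional F V]

lemma sup_rank1 {U P : Submodule F V} (hP : finrank F P = 1) (hnle : ¬ P ≤ U) :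
    finrank F ↥(U ⊔ P) = finrank F U + 1 := by
  have h := Submodule.finrank_sup_add_finrank_inf_eq U P
  have hinf : U ⊓ P = ⊥ := by
    rcases Nat.lt_or_ge (finrank F ↥(U ⊓ P)) 1 with h0 | h1
    · exact (Submodule.finrank_eq_zero).1 (by omega)
    · have : U ⊓ P = P :=
        Submodule.eq_of_le_of_finrank_le inf_le_right (by omega)
      exact absurd (this ▸ inf_le_left) hnle
  rw [hinf, finrank_bot] at h
  omega

def pencil (U M : Submodule F V) : Set (Submodule F V) :=
  {T | U ≤ T ∧ T ≤ M ∧ finrank F T = finrank F U + 1}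

lemma pencil_mem_unique {U M P T T' : Submodule F V}
    (hP : finrank F P = 1) (hPU : ¬ P ≤ U)
    (hT : T ∈ pencil U M) (hT' : T' ∈ pencil U M) (h1 : P ≤ T) (h2 : P ≤ T') : T = T' := by
  obtain ⟨hUT, hTM, hrT⟩ := hT
  obtain ⟨hUT', hTM', hrT'⟩ := hT'
  have e1 : U ⊔ P = T :=
    Submodule.eq_of_le_of_finrank_eq (sup_le hUT h1) (by rw [sup_rank1 hP hPU, hrT])
  have e2 : U ⊔ P = T' :=
    Submodule.eq_of_le_of_finrank_eq (sup_le hUT' h2) (by rw [sup_rank1 hP hPU, hrT'])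
  rw [← e1, ← e2]

lemma sup_mem_pencil {U M P : Submodule F V} (hUM : U ≤ M)
    (hP : finrank F P = 1) (hPM : P ≤ M) (hPU : ¬ P ≤ U) :
    U ⊔ P ∈ pencil U M :=
  ⟨le_sup_left, sup_le hUM hPM, sup_rank1 hP hPU⟩

lemma pencil_partition {U M : Submodule F V} (hUM : U ≤ M)
    (K : Set (Submodule F V)) (hK : ∀ P ∈ K, finrank F ↥P = 1) :
    ∑ T ∈ (pencil U M).toFinset, ({P | P ∈ K ∧ P ≤ T ∧ ¬ P ≤ U}).ncard
      = ({P | P ∈ K ∧ P ≤ M ∧ ¬ P ≤ U}).ncard := by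
  classical
  have hdisj : ∀ T ∈ (pencil U M).toFinset, ∀ T' ∈ (pencil U M).toFinset, T ≠ T' →
      Disjoint ({P | P ∈ K ∧ P ≤ T ∧ ¬ P ≤ U}).toFinset
        ({P | P ∈ K ∧ P ≤ T' ∧ ¬ P ≤ U}).toFinset := by
    intro T hT T' hT' hne
    rw [Set.mem_toFinset] at hT hT'
    refine Finset.disjoint_left.2 ?_
    intro P hP1 hP2
    rw [Set.mem_toFinset] at hP1 hP2
    exact hne (pencil_mem_unique (hK P hP1.1) hP1.2.2 hT hT' hP1.2.1 hP2.2.1)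
  have hunion : ((pencil U M).toFinset).biUnion
      (fun T => ({P | P ∈ K ∧ P ≤ T ∧ ¬ P ≤ U}).toFinset)
      = ({P | P ∈ K ∧ P ≤ M ∧ ¬ P ≤ U}).toFinset := by
    ext P
    simp only [Finset.mem_biUnion, Set.mem_toFinset, Set.mem_setOf_eq]
    constructor
    · rintro ⟨T, hT, hPK, hPT, hPU⟩
      exact ⟨hPK, hPT.trans hT.2.1, hPU⟩
    · rintro ⟨hPK, hPM, hPU⟩
      exact ⟨U ⊔ P, sup_mem_pencil hUM (hK P hPK) hPM hPU, hPK, le_sup_right, hPU⟩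
  have := Finset.card_biUnion hdisj
  rw [hunion] at this
  calc ∑ T ∈ (pencil U M).toFinset, ({P | P ∈ K ∧ P ≤ T ∧ ¬ P ≤ U}).ncard
      = ∑ T ∈ (pencil U M).toFinset, ({P | P ∈ K ∧ P ≤ T ∧ ¬ P ≤ U}).toFinset.card :=
        Finset.sum_congr rfl (fun T _ => Set.ncard_eq_toFinset_card' _)
    _ = ({P | P ∈ K ∧ P ≤ M ∧ ¬ P ≤ U}).ncard := by
        rw [← this, Set.ncard_eq_toFinset_card']

lemma ncard_split (K : Set (Submodule F V)) {U T : Submodule F V} (hUT : U ≤ T) :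
    {P | P ∈ K ∧ P ≤ T}.ncard
      = {P | P ∈ K ∧ P ≤ T ∧ ¬ P ≤ U}.ncard + {P | P ∈ K ∧ P ≤ U}.ncard := by
  classical
  rw [← Set.ncard_union_eq ?hd (Set.toFinite _) (Set.toFinite _)]
  · congr 1
    ext P
    simp only [Set.mem_setOf_eq, Set.mem_union]
    constructor
    · rintro ⟨hPK, hPT⟩
      by_cases h : P ≤ U
      · exact Or.inr ⟨hPK, h⟩
      · exact Or.inl ⟨hPK, hPT, h⟩
    · rintro (⟨hPK, hPT, _⟩ | ⟨hPK, hPU⟩)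
      · exact ⟨hPK, hPT⟩
      · exact ⟨hPK, hPU.trans hUT⟩
  case hd =>
    rw [Set.disjoint_left]
    rintro P ⟨_, _, hnot⟩ ⟨_, hle⟩
    exact hnot hle

lemma rank1_count (T : Submodule F V) :
    {P : Submodule F V | finrank F ↥P = 1 ∧ P ≤ T}.ncard * (Fintype.card F - 1)
      = Fintype.card F ^ finrank F ↥T - 1 := by
  classical
  set q := Fintype.card F with hq
  set A : Finset (Submodule F V) := {P : Submodule F V | finrank F ↥P = 1 ∧ P ≤ T}.toFinset with hA
  set S : Finset V := ((T : Set V) \ {0}).toFinset with hS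
  have hScard : S.card = q ^ finrank F ↥T - 1 := by
    rw [hS, Set.toFinset_diff, Finset.card_sdiff_of_subset]
    · rw [Set.toFinset_singleton, Finset.card_singleton, Set.toFinset_card]
      congr 1
      rw [hq]
      exact card_eq_pow_finrank
    · simp [Set.subset_toFinset, Set.singleton_subset_iff, T.zero_mem]
  have hmap : ∀ v ∈ S, Submodule.span F {v} ∈ A := by
    intro v hv
    rw [hS, Set.mem_toFinset] at hv
    obtain ⟨hvT, hv0⟩ := hv
    rw [hA, Set.mem_toFinset]
    refine ⟨finrank_span_singleton (by simpa using hv0), ?_⟩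
    rw [Submodule.span_le, Set.singleton_subset_iff]
    exact hvT
  have hcount := Finset.card_eq_sum_card_fiberwise hmap
  have hfiber : ∀ P ∈ A, (S.filter (fun v => Submodule.span F {v} = P)).card = q - 1 := by
    intro P hP
    rw [hA, Set.mem_toFinset] at hP
    obtain ⟨hP1, hPT⟩ := hP
    have hfib : S.filter (fun v => Submodule.span F {v} = P)
        = ((P : Set V) \ {0}).toFinset := by
      ext v
      simp only [Finset.mem_filter, hS, Set.mem_toFinset, Set.mem_diff, SetLike.mem_coe,
        Set.mem_singleton_iff]
      constructor
      · rintro ⟨⟨hvT, hv0⟩, hsp⟩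
        exact ⟨by rw [← hsp]; exact Submodule.mem_span_singleton_self v, hv0⟩
      · rintro ⟨hvP, hv0⟩
        have hsp : Submodule.span F {v} = P := by
          apply Submodule.eq_of_le_of_finrank_eq
          · rw [Submodule.span_le, Set.singleton_subset_iff]; exact hvP
          · rw [hP1]; exact finrank_span_singleton (by simpa using hv0)
        exact ⟨⟨hPT hvP, hv0⟩, hsp⟩
    rw [hfib, Set.toFinset_diff, Finset.card_sdiff_of_subset]
    · rw [Set.toFinset_singleton, Finset.card_singleton, Set.toFinset_card]
      congr 1
      rw [hq]
      have : Fintype.card ↥(P : Set V) = Fintype.card ↥P := rfl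
      rw [this]
      have := card_eq_pow_finrank (K := F) (V := ↥P)
      rw [this, hP1, pow_one]
    · simp [Set.subset_toFinset, Set.singleton_subset_iff, P.zero_mem]
  rw [Finset.sum_congr rfl hfiber, Finset.sum_const, smul_eq_mul] at hcount
  rw [Set.ncard_eq_toFinset_card', ← hA, ← hcount, hScard]

lemma new_count {U X : Submodule F V} (hUX : U ≤ X)
    (hX : finrank F X = finrank F U + 1) :
    {P : Submodule F V | (finrank F ↥P = 1) ∧ P ≤ X ∧ ¬ P ≤ U}.ncard
      = Fintype.card F ^ finrank F U := by
  classical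
  have hq2 : 2 ≤ Fintype.card F := Fintype.one_lt_card
  set u := finrank F ↥U with hu
  have hsplit := ncard_split {P : Submodule F V | finrank F ↥P = 1} (T := X) hUX
  have hrX := rank1_count (F := F) X
  have hrU := rank1_count (F := F) U
  rw [hX] at hrX
  set q := Fintype.card F with hq
  set nX := {P : Submodule F V | P ∈ {P : Submodule F V | finrank F ↥P = 1} ∧ P ≤ X ∧ ¬ P ≤ U}.ncard with hnX
  set rX := {P : Submodule F V | P ∈ {P : Submodule F V | finrank F ↥P = 1} ∧ P ≤ X}.ncard with hrXd
  set rU := {P : Submodule F V | P ∈ {P : Submodule F V | finrank F ↥P = 1} ∧ P ≤ U}.ncard with hrUd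
  have erX : {P : Submodule F V | finrank F ↥P = 1 ∧ P ≤ X}.ncard = rX := rfl
  have erU : {P : Submodule F V | finrank F ↥P = 1 ∧ P ≤ U}.ncard = rU := rfl
  have enX : {P : Submodule F V | finrank F ↥P = 1 ∧ P ≤ X ∧ ¬ P ≤ U}.ncard = nX := rfl
  rw [erX] at hrX
  rw [erU] at hrU
  rw [enX]
  have h1 : (1:ℕ) ≤ q ^ u := Nat.one_le_pow _ _ (by omega)
  have h2 : (1:ℕ) ≤ q ^ (u+1) := Nat.one_le_pow _ _ (by omega)
  have hrX' : (rX : ℤ) * ((q:ℤ) - 1) = (q:ℤ)^(u+1) - 1 := by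
    have := congrArg (Nat.cast : ℕ → ℤ) hrX
    push_cast [Nat.cast_sub (by omega : 1 ≤ q), Nat.cast_sub h2] at this
    exact this
  have hrU' : (rU : ℤ) * ((q:ℤ) - 1) = (q:ℤ)^u - 1 := by
    have := congrArg (Nat.cast : ℕ → ℤ) hrU
    push_cast [Nat.cast_sub (by omega : 1 ≤ q), Nat.cast_sub (show 1 ≤ q ^ finrank F ↥U from h1)] at this
    exact this
  have hs' : (rX : ℤ) = (nX : ℤ) + (rU : ℤ) := by exact_mod_cast hsplit
  have key : (nX : ℤ) * ((q:ℤ) - 1) = (q:ℤ)^u * ((q:ℤ) - 1) := by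
    calc (nX:ℤ) * ((q:ℤ)-1) = (rX:ℤ)*((q:ℤ)-1) - (rU:ℤ)*((q:ℤ)-1) := by rw [hs']; ring
      _ = ((q:ℤ)^(u+1) - 1) - ((q:ℤ)^u - 1) := by rw [hrX', hrU']
      _ = (q:ℤ)^u * ((q:ℤ)-1) := by rw [pow_succ]; ring
  have hne : ((q:ℤ) - 1) ≠ 0 := by
    have : (2:ℤ) ≤ (q:ℤ) := by exact_mod_cast hq2
    omega
  have := mul_right_cancel₀ hne key
  exact_mod_cast this

lemma pencil_card {U M : Submodule F V} (hUM : U ≤ M)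
    (hM : finrank F M = finrank F U + 2) :
    (pencil U M).toFinset.card = Fintype.card F + 1 := by
  classical
  have hq2 : 2 ≤ Fintype.card F := Fintype.one_lt_card
  set u := finrank F ↥U with hu
  have hpart := pencil_partition hUM {P : Submodule F V | finrank F ↥P = 1} (fun P hP => hP)
  have hsplit := ncard_split {P : Submodule F V | finrank F ↥P = 1} (T := M) hUM
  have hrM := rank1_count (F := F) M
  have hrU := rank1_count (F := F) U
  rw [hM] at hrM
  set q := Fintype.card F with hq
  have hterm : ∀ T ∈ (pencil U M).toFinset,
      ({P : Submodule F V | P ∈ {P : Submodule F V | finrank F ↥P = 1} ∧ P ≤ T ∧ ¬ P ≤ U}).ncard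
        = q ^ u := by
    intro T hT
    rw [Set.mem_toFinset] at hT
    exact new_count hT.1 hT.2.2
  rw [Finset.sum_congr rfl hterm, Finset.sum_const, smul_eq_mul] at hpart
  set nM := {P : Submodule F V | P ∈ {P : Submodule F V | finrank F ↥P = 1} ∧ P ≤ M ∧ ¬ P ≤ U}.ncard with hnM
  set rM := {P : Submodule F V | P ∈ {P : Submodule F V | finrank F ↥P = 1} ∧ P ≤ M}.ncard with hrMd
  set rU := {P : Submodule F V | P ∈ {P : Submodule F V | finrank F ↥P = 1} ∧ P ≤ U}.ncard with hrUd
  have erM : {P : Submodule F V | finrank F ↥P = 1 ∧ P ≤ M}.ncard = rM := rfl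
  have erU : {P : Submodule F V | finrank F ↥P = 1 ∧ P ≤ U}.ncard = rU := rfl
  rw [erM] at hrM
  rw [erU] at hrU
  set k := (pencil U M).toFinset.card with hk
  have h1 : (1:ℕ) ≤ q ^ u := Nat.one_le_pow _ _ (by omega)
  have h2 : (1:ℕ) ≤ q ^ (u+2) := Nat.one_le_pow _ _ (by omega)
  have hrM' : (rM : ℤ) * ((q:ℤ) - 1) = (q:ℤ)^(u+2) - 1 := by
    have := congrArg (Nat.cast : ℕ → ℤ) hrM
    push_cast [Nat.cast_sub (by omega : 1 ≤ q), Nat.cast_sub h2] at this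
    exact this
  have hrU' : (rU : ℤ) * ((q:ℤ) - 1) = (q:ℤ)^u - 1 := by
    have := congrArg (Nat.cast : ℕ → ℤ) hrU
    push_cast [Nat.cast_sub (by omega : 1 ≤ q), Nat.cast_sub (show 1 ≤ q ^ finrank F ↥U from h1)] at this
    exact this
  have hs' : (rM : ℤ) = (nM : ℤ) + (rU : ℤ) := by exact_mod_cast hsplit
  have hp' : (k : ℤ) * (q:ℤ)^u = (nM : ℤ) := by exact_mod_cast hpart
  have key : (k:ℤ) * ((q:ℤ)^u * ((q:ℤ)-1)) = ((q:ℤ)+1) * ((q:ℤ)^u * ((q:ℤ)-1)) := by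
    calc (k:ℤ) * ((q:ℤ)^u * ((q:ℤ)-1)) = (nM:ℤ) * ((q:ℤ)-1) := by rw [← hp']; ring
      _ = (rM:ℤ)*((q:ℤ)-1) - (rU:ℤ)*((q:ℤ)-1) := by rw [hs']; ring
      _ = ((q:ℤ)^(u+2) - 1) - ((q:ℤ)^u - 1) := by rw [hrM', hrU']
      _ = ((q:ℤ)+1) * ((q:ℤ)^u * ((q:ℤ)-1)) := by rw [pow_add]; ring
  have hq' : (2:ℤ) ≤ (q:ℤ) := by exact_mod_cast hq2
  have hpos : (0:ℤ) < (q:ℤ)^u := pow_pos (by omega) u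
  have hne : ((q:ℤ)^u * ((q:ℤ)-1)) ≠ 0 := ne_of_gt (mul_pos hpos (by omega))
  have := mul_right_cancel₀ hne key
  exact_mod_cast this

lemma pencil_sum {U M : Submodule F V} (hUM : U ≤ M)
    (hM : finrank F M = finrank F U + 2)
    (K : Set (Submodule F V)) (hK : ∀ P ∈ K, finrank F ↥P = 1) :
    ∑ T ∈ (pencil U M).toFinset, {P | P ∈ K ∧ P ≤ T}.ncard
      = Fintype.card F * {P | P ∈ K ∧ P ≤ U}.ncard + {P | P ∈ K ∧ P ≤ M}.ncard := by
  classical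
  have hterm : ∀ T ∈ (pencil U M).toFinset,
      {P | P ∈ K ∧ P ≤ T}.ncard
        = {P | P ∈ K ∧ P ≤ T ∧ ¬ P ≤ U}.ncard + {P | P ∈ K ∧ P ≤ U}.ncard := by
    intro T hT
    rw [Set.mem_toFinset] at hT
    exact ncard_split K hT.1
  rw [Finset.sum_congr rfl hterm, Finset.sum_add_distrib, Finset.sum_const, smul_eq_mul,
    pencil_partition hUM K hK, pencil_card hUM hM, ncard_split K hUM]
  ring

end helpers

lemma plane_combinatorics (q : ℕ) (hq : 3 ≤ q) {α β : Type*}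
    [DecidableEq α] [DecidableEq β]
    (Pt : Finset α) (Ln : Finset β) (I : α → β → Prop) [∀ a b, Decidable (I a b)]
    (δ : α → ℕ) (hδ2 : ∀ p ∈ Pt, δ p ≤ 2)
    (ε : β → ℤ) (hε : ∀ l ∈ Ln, ε l = -1 ∨ ε l = 0 ∨ ε l = 1)
    (N : ℤ)
    (hlc : ∀ l ∈ Ln, (Pt.filter (fun p => I p l)).card = q + 1)
    (hpc : ∀ p ∈ Pt, (Ln.filter (fun l => I p l)).card = q + 1)
    (hline : ∀ l ∈ Ln, ∑ p ∈ Pt.filter (fun p => I p l), (δ p : ℤ) = N + q + ε l)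
    (hpoint : ∀ p ∈ Pt, ∑ l ∈ Ln.filter (fun l => I p l), ε l = q * ((δ p : ℤ) - 1))
    (l₀ : β) (hl₀ : l₀ ∈ Ln) (hεl₀ : ε l₀ = 1) :
    N = 0 ∨ N = 1 ∨ N = 2 ∨ N = (q : ℤ) + 1 := by
  classical
  -- point profile facts
  -- (PA-i) a point of value 2 lies on no minus line
  have PAi : ∀ p ∈ Pt, δ p = 2 → ∀ l ∈ Ln, I p l → ε l ≠ -1 := by
    intro p hp hδp l hl hI hεl
    have hS := hpoint p hp
    rw [hδp] at hS
    have hmem : l ∈ Ln.filter (fun l => I p l) := Finset.mem_filter.2 ⟨hl, hI⟩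
    have hub := Finset.sum_le_card_nsmul ((Ln.filter (fun l => I p l)).erase l) (fun x => ε x) 1 (by
      intro x hx
      beta_reduce
      have hx' := Finset.mem_of_mem_erase hx
      rcases hε x (Finset.mem_filter.1 hx').1 with h | h | h <;> omega)
    rw [Finset.card_erase_of_mem hmem, hpc p hp] at hub
    have hsplit := Finset.sum_erase_add (Ln.filter (fun l => I p l)) ε hmem
    simp only [nsmul_eq_mul] at hub
    push_cast at hub hS hsplit ⊢
    omega
  -- (PZ-i) a point of value 0 lies on no plus line
  have PZi : ∀ p ∈ Pt, δ p = 0 → ∀ l ∈ Ln, I p l → ε l ≠ 1 := by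
    intro p hp hδp l hl hI hεl
    have hS := hpoint p hp
    rw [hδp] at hS
    have hmem : l ∈ Ln.filter (fun l => I p l) := Finset.mem_filter.2 ⟨hl, hI⟩
    have hlb := Finset.card_nsmul_le_sum ((Ln.filter (fun l => I p l)).erase l) (fun x => ε x) (-1) (by
      intro x hx
      beta_reduce
      have hx' := Finset.mem_of_mem_erase hx
      rcases hε x (Finset.mem_filter.1 hx').1 with h | h | h <;> omega)
    rw [Finset.card_erase_of_mem hmem, hpc p hp] at hlb
    have hsplit := Finset.sum_erase_add (Ln.filter (fun l => I p l)) ε hmem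
    simp only [nsmul_eq_mul] at hlb
    push_cast at hlb hS hsplit ⊢
    omega
  -- (PA-ii) a point of value 2 lies on some zero line
  have PAii : ∀ p ∈ Pt, δ p = 2 → ∃ l ∈ Ln, I p l ∧ ε l = 0 := by
    intro p hp hδp
    by_contra hno
    push_neg at hno
    have hall : ∀ l ∈ Ln.filter (fun l => I p l), ε l = 1 := by
      intro l hl
      obtain ⟨hl1, hl2⟩ := Finset.mem_filter.1 hl
      rcases hε l hl1 with h | h | h
      · exact absurd h (PAi p hp hδp l hl1 hl2)
      · exact absurd h (hno l hl1 hl2)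
      · exact h
    have hS := hpoint p hp
    rw [Finset.sum_congr rfl hall, Finset.sum_const, hpc p hp, hδp] at hS
    simp only [nsmul_eq_mul, mul_one] at hS
    push_cast at hS
    omega
  -- (PA-iii) a point of value 2 lies on some plus line
  have PAiii : ∀ p ∈ Pt, δ p = 2 → ∃ l ∈ Ln, I p l ∧ ε l = 1 := by
    intro p hp hδp
    by_contra hno
    push_neg at hno
    have hS := hpoint p hp
    rw [hδp] at hS
    have hub := Finset.sum_le_card_nsmul (Ln.filter (fun l => I p l)) (fun x => ε x) 0 (by
      intro x hx
      beta_reduce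
      obtain ⟨hx1, hx2⟩ := Finset.mem_filter.1 hx
      rcases hε x hx1 with h | h | h
      · omega
      · omega
      · exact absurd h (hno x hx1 hx2))
    simp only [smul_zero] at hub
    push_cast at hS
    omega
  -- (PZ-iii) a point of value 0 lies on some minus line
  have PZiii : ∀ p ∈ Pt, δ p = 0 → ∃ l ∈ Ln, I p l ∧ ε l = -1 := by
    intro p hp hδp
    by_contra hno
    push_neg at hno
    have hS := hpoint p hp
    rw [hδp] at hS
    have hlb := Finset.card_nsmul_le_sum (Ln.filter (fun l => I p l)) (fun x => ε x) 0 (by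
      intro x hx
      beta_reduce
      obtain ⟨hx1, hx2⟩ := Finset.mem_filter.1 hx
      rcases hε x hx1 with h | h | h
      · exact absurd h (hno x hx1 hx2)
      · omega
      · omega)
    simp only [smul_zero] at hlb
    push_cast at hS
    omega
  -- (P1) a point of value 1 on a plus line lies on some minus line
  have P1 : ∀ p ∈ Pt, δ p = 1 → ∀ l ∈ Ln, I p l → ε l = 1 →
      ∃ l' ∈ Ln, I p l' ∧ ε l' = -1 := by
    intro p hp hδp l hl hI hεl
    by_contra hno
    push_neg at hno
    have hS := hpoint p hp
    rw [hδp] at hS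
    have hmem : l ∈ Ln.filter (fun l => I p l) := Finset.mem_filter.2 ⟨hl, hI⟩
    have hlb := Finset.card_nsmul_le_sum ((Ln.filter (fun l => I p l)).erase l) (fun x => ε x) 0 (by
      intro x hx
      beta_reduce
      have hx' := Finset.mem_of_mem_erase hx
      obtain ⟨hx1, hx2⟩ := Finset.mem_filter.1 hx'
      rcases hε x hx1 with h | h | h
      · exact absurd h (hno x hx1 hx2)
      · omega
      · omega)
    have hsplit := Finset.sum_erase_add (Ln.filter (fun l => I p l)) ε hmem
    simp only [smul_zero] at hlb
    push_cast at hS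
    omega
  -- line sum bounds
  -- a line whose points all have value in {1,2} and which contains a point of value 2
  have L12 : ∀ l ∈ Ln, (∀ p ∈ Pt, I p l → δ p ≠ 0) → (∃ p ∈ Pt, I p l ∧ δ p = 2) →
      (q : ℤ) + 2 ≤ N + q + ε l := by
    rintro l hl hno ⟨p, hp, hI, hδp⟩
    rw [← hline l hl]
    have hmem : p ∈ Pt.filter (fun p => I p l) := Finset.mem_filter.2 ⟨hp, hI⟩
    have hlb := Finset.card_nsmul_le_sum ((Pt.filter (fun p => I p l)).erase p)
      (fun p => (δ p : ℤ)) 1 (by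
        intro x hx
        beta_reduce
        have hx' := Finset.mem_of_mem_erase hx
        obtain ⟨hx1, hx2⟩ := Finset.mem_filter.1 hx'
        have := hno x hx1 hx2
        have := hδ2 x hx1
        push_cast
        omega)
    rw [Finset.card_erase_of_mem hmem, hlc l hl] at hlb
    have hsplit := Finset.sum_erase_add (Pt.filter (fun p => I p l))
      (fun p => (δ p : ℤ)) hmem
    simp only [nsmul_eq_mul, mul_one] at hlb
    push_cast at hlb hsplit ⊢
    omega
  -- a line whose points all have value in {0,1} and which contains a point of value 0
  have L01 : ∀ l ∈ Ln, (∀ p ∈ Pt, I p l → δ p ≠ 2) → (∃ p ∈ Pt, I p l ∧ δ p = 0) →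
      N + q + ε l ≤ (q : ℤ) := by
    rintro l hl hno ⟨p, hp, hI, hδp⟩
    rw [← hline l hl]
    have hmem : p ∈ Pt.filter (fun p => I p l) := Finset.mem_filter.2 ⟨hp, hI⟩
    have hub := Finset.sum_le_card_nsmul ((Pt.filter (fun p => I p l)).erase p)
      (fun p => (δ p : ℤ)) 1 (by
        intro x hx
        beta_reduce
        have hx' := Finset.mem_of_mem_erase hx
        obtain ⟨hx1, hx2⟩ := Finset.mem_filter.1 hx'
        have := hno x hx1 hx2
        have := hδ2 x hx1
        push_cast
        omega)
    rw [Finset.card_erase_of_mem hmem, hlc l hl] at hub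
    have hsplit := Finset.sum_erase_add (Pt.filter (fun p => I p l))
      (fun p => (δ p : ℤ)) hmem
    simp only [nsmul_eq_mul, mul_one] at hub
    push_cast at hub hsplit ⊢
    omega
  -- a line whose points all have value c has sum (q+1) * c
  have Lconst : ∀ l ∈ Ln, ∀ c : ℕ, (∀ p ∈ Pt, I p l → δ p = c) →
      N + q + ε l = ((q : ℤ) + 1) * c := by
    intro l hl c hall
    rw [← hline l hl, Finset.sum_congr rfl (fun p hp => by
      obtain ⟨hp1, hp2⟩ := Finset.mem_filter.1 hp
      rw [hall p hp1 hp2]), Finset.sum_const, hlc l hl]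
    simp only [nsmul_eq_mul]
    push_cast
    ring
  -- main case analysis
  by_cases hA : ∃ p ∈ Pt, δ p = 2
  · obtain ⟨p₂, hp₂, hδp₂⟩ := hA
    by_cases hZ : ∃ p ∈ Pt, δ p = 0
    · -- both: N = 1
      obtain ⟨p₀, hp₀, hδp₀⟩ := hZ
      obtain ⟨lp, hlp, hIlp, hεlp⟩ := PAiii p₂ hp₂ hδp₂
      obtain ⟨lm, hlm, hIlm, hεlm⟩ := PZiii p₀ hp₀ hδp₀
      have h1 : (q : ℤ) + 2 ≤ N + q + ε lp := by
        apply L12 lp hlp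
        · intro p hp hI hδ0
          exact (PZi p hp hδ0 lp hlp hI) hεlp
        · exact ⟨p₂, hp₂, hIlp, hδp₂⟩
      have h2 : N + q + ε lm ≤ (q : ℤ) := by
        apply L01 lm hlm
        · intro p hp hI hδ2'
          exact (PAi p hp hδ2' lm hlm hI) hεlm
        · exact ⟨p₀, hp₀, hIlm, hδp₀⟩
      rw [hεlp] at h1
      rw [hεlm] at h2
      right; left
      omega
    · -- A nonempty, Z empty : N = 2 or N = q+1
      push_neg at hZ
      -- N ≥ 2 via the zero line through p₂
      obtain ⟨l₁, hl₁, hIl₁, hεl₁⟩ := PAii p₂ hp₂ hδp₂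
      have h1 : (q : ℤ) + 2 ≤ N + q + ε l₁ := by
        apply L12 l₁ hl₁
        · intro p hp hI
          exact hZ p hp
        · exact ⟨p₂, hp₂, hIl₁, hδp₂⟩
      rw [hεl₁] at h1
      by_cases hN2 : N = 2
      · right; right; left; exact hN2
      · -- N ≥ 3, show no minus lines, then l₀ is all 2s
        have hN3 : 3 ≤ N := by omega
        have hnominus : ∀ l ∈ Ln, ε l ≠ -1 := by
          intro l hl hεl
          -- the line sum is N + q - 1 ≥ q + 2 > q + 1, so some point has δ ≥ 2
          have hsum := hline l hl
          have : ∃ p ∈ Pt.filter (fun p => I p l), δ p = 2 := by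
            by_contra hc
            push_neg at hc
            have hub := Finset.sum_le_card_nsmul (Pt.filter (fun p => I p l))
              (fun p => (δ p : ℤ)) 1 (by
                intro x hx
                beta_reduce
                obtain ⟨hx1, hx2⟩ := Finset.mem_filter.1 hx
                have h2' := hδ2 x hx1
                have h0 := hZ x hx1
                have hne2 := hc x hx
                push_cast
                omega)
            rw [hlc l hl] at hub
            simp only [nsmul_eq_mul, mul_one] at hub
            rw [hsum, hεl] at hub
            push_cast at hub
            omega
          obtain ⟨p, hp, hδp⟩ := this
          obtain ⟨hp1, hp2⟩ := Finset.mem_filter.1 hp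
          exact (PAi p hp1 hδp l hl hp2) hεl
        -- every point on l₀ has δ = 2
        have hall2 : ∀ p ∈ Pt, I p l₀ → δ p = 2 := by
          intro p hp hI
          have h2' := hδ2 p hp
          have h0 := hZ p hp
          rcases Nat.lt_or_ge (δ p) 2 with h | h
          · exfalso
            have hδ1 : δ p = 1 := by omega
            obtain ⟨l', hl', hIl', hεl'⟩ := P1 p hp hδ1 l₀ hl₀ hI hεl₀
            exact (hnominus l' hl') hεl'
          · omega
        have := Lconst l₀ hl₀ 2 hall2
        rw [hεl₀] at this
        right; right; right
        push_cast at this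
        omega
  · push_neg at hA
    by_cases hZ : ∃ p ∈ Pt, δ p = 0
    · -- Z nonempty, A empty : N = 0
      obtain ⟨p₀, hp₀, hδp₀⟩ := hZ
      have hall1 : ∀ p ∈ Pt, I p l₀ → δ p = 1 := by
        intro p hp hI
        have h2' := hδ2 p hp
        have hne2 := hA p hp
        rcases Nat.lt_or_ge (δ p) 1 with h | h
        · exfalso
          have hδ0 : δ p = 0 := by omega
          exact (PZi p hp hδ0 l₀ hl₀ hI) hεl₀
        · omega
      have := Lconst l₀ hl₀ 1 hall1
      rw [hεl₀] at this
      left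
      push_cast at this
      omega
    · -- all δ = 1 : N = 0
      push_neg at hZ
      have hall1 : ∀ p ∈ Pt, I p l₀ → δ p = 1 := by
        intro p hp hI
        have h2' := hδ2 p hp
        have hne2 := hA p hp
        have hne0 := hZ p hp
        omega
      have := Lconst l₀ hl₀ 1 hall1
      rw [hεl₀] at this
      left
      push_cast at this
      omega
theorem stmt_19
    (q n : ℕ) (hq : 2 < q) (hn : 2 ≤ n)
    (F : Type*) [Field F] [Fintype F] (hF : Fintype.card F = q)
    (K : Set (Submodule F (Fin (2 * n + 1) → F)))
    (hK : ∀ P ∈ K, Module.finrank F P = 1)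
    (H₁ H₂ H₃ C₁ C₂ C₃ : ℕ)
    (hH₁ : (H₁ : ℤ) = ((q : ℤ) ^ n - 1) * ((q : ℤ) ^ (n - 1) + 1) / ((q : ℤ) - 1))
    (hH₂ : (H₂ : ℤ) = ((q : ℤ) ^ n + 1) * ((q : ℤ) ^ (n - 1) - 1) / ((q : ℤ) - 1))
    (hH₃ : (H₃ : ℤ) = 1 + (q : ℤ) * ((q : ℤ) ^ (2 * n - 2) - 1) / ((q : ℤ) - 1))
    (hC₁ : (C₁ : ℤ) = ((q : ℤ) ^ (2 * n - 2) - 1) / ((q : ℤ) - 1))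
    (hC₂ : (C₂ : ℤ) = 1 + (q : ℤ) * (((q : ℤ) ^ (n - 1) - 1) * ((q : ℤ) ^ (n - 2) + 1)) / ((q : ℤ) - 1))
    (hC₃ : (C₃ : ℤ) = 1 + (q : ℤ) * (((q : ℤ) ^ (n - 1) + 1) * ((q : ℤ) ^ (n - 2) - 1)) / ((q : ℤ) - 1))
    (hhyp : ∀ W : Submodule F (Fin (2 * n + 1) → F), Module.finrank F W = 2 * n →
      {P | P ∈ K ∧ P ≤ W}.ncard = H₁ ∨ {P | P ∈ K ∧ P ≤ W}.ncard = H₂ ∨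
      {P | P ∈ K ∧ P ≤ W}.ncard = H₃)
    (hcod2 : ∀ W : Submodule F (Fin (2 * n + 1) → F), Module.finrank F W = 2 * n - 1 →
      {P | P ∈ K ∧ P ≤ W}.ncard = C₁ ∨ {P | P ∈ K ∧ P ≤ W}.ncard = C₂ ∨
      {P | P ∈ K ∧ P ≤ W}.ncard = C₃)
    (hcard : (K.ncard : ℤ) = ((q : ℤ) ^ (2 * n) - 1) / ((q : ℤ) - 1))
    :
    ∀ γ : Submodule F (Fin (2 * n + 1) → F), Module.finrank F γ = 2 * n - 2 →
      (∃ W : Submodule F (Fin (2 * n + 1) → F), Module.finrank F W = 2 * n ∧ γ ≤ W ∧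
        {P | P ∈ K ∧ P ≤ W}.ncard = H₁) →
      ∃ N ∈ ({0, 1, 2, q + 1} : Set ℕ),
        ({P | P ∈ K ∧ P ≤ γ}.ncard : ℤ) =
          (N : ℤ) * (q : ℤ) ^ (n - 2) + ((q : ℤ) ^ (n - 1) + 1) * ((q : ℤ) ^ (n - 2) - 1) / ((q : ℤ) - 1) := by
  classical
  intro γ hγdim hex
  obtain ⟨W₀, hW₀dim, hγW₀, hcW₀⟩ := hex
  obtain ⟨m, rfl⟩ : ∃ m, n = m + 2 := ⟨n - 2, by omega⟩
  -- integer abbreviations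
  set Q : ℤ := (q : ℤ) with hQdef
  set A : ℤ := Q ^ m with hAdef
  have hq3 : 3 ≤ q := hq
  have hQ3 : (3:ℤ) ≤ Q := by rw [hQdef]; exact_mod_cast hq3
  have hQ1 : Q - 1 ≠ 0 := by omega
  have hApos : 0 < A := pow_pos (by omega) m
  have hQA : Q * A ≠ 0 := by positivity
  -- power rewrites
  have pw1 : Q ^ (m + 2 - 1) = Q * A := by
    rw [show m + 2 - 1 = m + 1 from by omega, pow_succ]; ring
  have pw2 : Q ^ (m + 2 - 2) = A := by
    rw [show m + 2 - 2 = m from by omega]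
  have pw3 : Q ^ (m + 2) = Q ^ 2 * A := by
    rw [pow_add]; ring
  have pw4 : Q ^ (2 * (m + 2) - 2) = Q ^ 2 * A ^ 2 := by
    rw [show 2 * (m + 2) - 2 = m + (m + 2) from by omega, pow_add, pow_add]; ring
  have pw5 : Q ^ (2 * (m + 2)) = Q ^ 4 * A ^ 2 := by
    rw [show 2 * (m + 2) = m + (m + (2 + 2)) from by omega, pow_add, pow_add, pow_add]; ring
  -- divisibility
  have dv : ∀ k : ℕ, (Q - 1) ∣ Q ^ k - 1 := by
    intro k
    exact ⟨∑ i ∈ Finset.range k, Q ^ i, by rw [mul_comm]; exact (geom_sum_mul Q k).symm⟩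
  -- multiplied forms of the parameters
  have hH₁m : (H₁ : ℤ) * (Q - 1) = (Q ^ 2 * A - 1) * (Q * A + 1) := by
    rw [hH₁, Int.ediv_mul_cancel (dvd_mul_of_dvd_left (dv (m+2)) _), pw3, pw1]
  have hH₂m : (H₂ : ℤ) * (Q - 1) = (Q ^ 2 * A + 1) * (Q * A - 1) := by
    rw [hH₂, Int.ediv_mul_cancel (dvd_mul_of_dvd_right (dv (m+2-1)) _), pw3, pw1]
  have hH₃m : (H₃ : ℤ) * (Q - 1) = (Q - 1) + Q * (Q ^ 2 * A ^ 2 - 1) := by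
    rw [hH₃]
    rw [add_mul, one_mul, Int.ediv_mul_cancel ((dv (2*(m+2)-2)).mul_left Q), pw4]
  have hC₁m : (C₁ : ℤ) * (Q - 1) = Q ^ 2 * A ^ 2 - 1 := by
    rw [hC₁, Int.ediv_mul_cancel (dv (2*(m+2)-2)), pw4]
  have hC₂m : (C₂ : ℤ) * (Q - 1) = (Q - 1) + Q * ((Q * A - 1) * (A + 1)) := by
    rw [hC₂, add_mul, one_mul,
      Int.ediv_mul_cancel (((dvd_mul_of_dvd_left (dv (m+2-1)) _)).mul_left Q), pw1, pw2]
  have hC₃m : (C₃ : ℤ) * (Q - 1) = (Q - 1) + Q * ((Q * A + 1) * (A - 1)) := by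
    rw [hC₃, add_mul, one_mul,
      Int.ediv_mul_cancel (((dvd_mul_of_dvd_right (dv (m+2-2)) _)).mul_left Q), pw1, pw2]
  have hKm : (K.ncard : ℤ) * (Q - 1) = Q ^ 4 * A ^ 2 - 1 := by
    rw [hcard, Int.ediv_mul_cancel (dv (2*(m+2))), pw5]
  -- difference identities
  have eqC1 : (C₁ : ℤ) = (C₃ : ℤ) + Q * A := by
    apply mul_right_cancel₀ hQ1
    rw [hC₁m]
    linear_combination -hC₃m
  have eqC2 : (C₂ : ℤ) = (C₃ : ℤ) + 2 * (Q * A) := by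
    apply mul_right_cancel₀ hQ1
    rw [hC₂m]
    linear_combination -hC₃m
  have eqH1 : (H₁ : ℤ) = (H₃ : ℤ) + Q * A := by
    apply mul_right_cancel₀ hQ1
    rw [hH₁m]
    linear_combination -hH₃m
  have eqH2 : (H₂ : ℤ) = (H₃ : ℤ) - Q * A := by
    apply mul_right_cancel₀ hQ1
    rw [hH₂m]
    linear_combination -hH₃m
  have eqK : (K.ncard : ℤ) + Q * (C₃ : ℤ) - (Q + 1) * (H₃ : ℤ) = -(Q^2 * A) := by
    apply mul_right_cancel₀ hQ1
    linear_combination hKm + Q * hC₃m - (Q+1) * hH₃m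
  -- dimension of the ambient space
  have hdimV : finrank F (Fin (2 * (m + 2) + 1) → F) = 2 * (m + 2) + 1 := Module.finrank_fin_fun (R := F)
  -- the local weight functions
  set dl : Submodule F (Fin (2 * (m + 2) + 1) → F) → ℕ := fun β =>
    if {P | P ∈ K ∧ P ≤ β}.ncard = C₂ then 2
    else if {P | P ∈ K ∧ P ≤ β}.ncard = C₁ then 1 else 0 with hdl
  set el : Submodule F (Fin (2 * (m + 2) + 1) → F) → ℤ := fun W =>
    if {P | P ∈ K ∧ P ≤ W}.ncard = H₁ then 1
    else if {P | P ∈ K ∧ P ≤ W}.ncard = H₂ then -1 else 0 with hel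
  have hδprop : ∀ β : Submodule F (Fin (2 * (m + 2) + 1) → F), finrank F β = 2 * (m + 2) - 1 →
      (({P | P ∈ K ∧ P ≤ β}.ncard : ℤ) = (C₃ : ℤ) + (dl β : ℤ) * (Q * A)) ∧ dl β ≤ 2 := by
    intro β hβ
    simp only [hdl]
    split_ifs with h1 h2
    · refine ⟨?_, le_refl 2⟩
      rw [h1, eqC2]; push_cast; ring
    · refine ⟨?_, by omega⟩
      rw [h2, eqC1]; push_cast; ring
    · rcases hcod2 β hβ with h | h | h
      · exact absurd h h2
      · exact absurd h h1
      · refine ⟨?_, by omega⟩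
        rw [h]; push_cast; ring
  have hεprop : ∀ W : Submodule F (Fin (2 * (m + 2) + 1) → F), finrank F W = 2 * (m + 2) →
      (({P | P ∈ K ∧ P ≤ W}.ncard : ℤ) = (H₃ : ℤ) + el W * (Q * A))
        ∧ (el W = -1 ∨ el W = 0 ∨ el W = 1) := by
    intro W hW
    simp only [hel]
    split_ifs with h1 h2
    · refine ⟨?_, Or.inr (Or.inr rfl)⟩
      rw [h1, eqH1]; push_cast; ring
    · refine ⟨?_, Or.inl rfl⟩
      rw [h2, eqH2]; push_cast; ring
    · rcases hhyp W hW with h | h | h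
      · exact absurd h h1
      · exact absurd h h2
      · refine ⟨?_, Or.inr (Or.inl rfl)⟩
        rw [h]; push_cast; ring
  have hεW₀ : el W₀ = 1 := by simp only [hel]; rw [if_pos hcW₀]
  -- the incidence structure: points are the codim-3+1 subspaces over γ, lines the hyperplanes
  set Pt : Finset (Submodule F (Fin (2 * (m + 2) + 1) → F)) :=
    {β : Submodule F (Fin (2 * (m + 2) + 1) → F) | γ ≤ β ∧ finrank F β = 2 * (m + 2) - 1}.toFinset with hPt
  set Ln : Finset (Submodule F (Fin (2 * (m + 2) + 1) → F)) :=
    {W : Submodule F (Fin (2 * (m + 2) + 1) → F) | γ ≤ W ∧ finrank F W = 2 * (m + 2)}.toFinset with hLn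
  have hW₀Ln : W₀ ∈ Ln := by rw [hLn, Set.mem_toFinset]; exact ⟨hγW₀, hW₀dim⟩
  have hlineset : ∀ l ∈ Ln, Pt.filter (fun p => p ≤ l) = (pencil γ l).toFinset := by
    intro l hl
    rw [hLn, Set.mem_toFinset] at hl
    ext β
    rw [Finset.mem_filter, hPt, Set.mem_toFinset, Set.mem_toFinset]
    constructor
    · rintro ⟨⟨h1, h2⟩, h3⟩
      exact ⟨h1, h3, by rw [h2, hγdim]; omega⟩
    · rintro ⟨h1, h2, h3⟩
      rw [hγdim] at h3
      exact ⟨⟨h1, by omega⟩, h2⟩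
  have hpointset : ∀ p ∈ Pt, Ln.filter (fun l => p ≤ l)
      = (pencil p (⊤ : Submodule F (Fin (2 * (m + 2) + 1) → F))).toFinset := by
    intro p hp
    rw [hPt, Set.mem_toFinset] at hp
    ext W
    rw [Finset.mem_filter, hLn, Set.mem_toFinset, Set.mem_toFinset]
    constructor
    · rintro ⟨⟨h1, h2⟩, h3⟩
      exact ⟨h3, le_top, by rw [h2, hp.2]; omega⟩
    · rintro ⟨h1, h2, h3⟩
      rw [hp.2] at h3
      exact ⟨⟨hp.1.trans h1, by omega⟩, h1⟩
  have hlc : ∀ l ∈ Ln, (Pt.filter (fun p => p ≤ l)).card = q + 1 := by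
    intro l hl
    have hl' := hl
    rw [hLn, Set.mem_toFinset] at hl'
    rw [hlineset l hl, pencil_card hl'.1 (by rw [hl'.2, hγdim]; omega), hF]
  have hpc : ∀ p ∈ Pt, (Ln.filter (fun l => p ≤ l)).card = q + 1 := by
    intro p hp
    have hp' := hp
    rw [hPt, Set.mem_toFinset] at hp'
    rw [hpointset p hp,
      pencil_card le_top (by rw [finrank_top, hdimV, hp'.2]; omega), hF]
  -- the line identity
  have hkey : ∀ l ∈ Ln,
      ((q:ℤ) + 1) * (C₃:ℤ) + (Q * A) * (∑ p ∈ Pt.filter (fun p => p ≤ l), (dl p : ℤ))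
        = Q * ({P | P ∈ K ∧ P ≤ γ}.ncard : ℤ) + ((H₃:ℤ) + el l * (Q * A)) := by
    intro l hl
    have hl' := hl
    rw [hLn, Set.mem_toFinset] at hl'
    have hsum := pencil_sum hl'.1 (by rw [hl'.2, hγdim]; omega) K hK
    rw [← hlineset l hl, hF] at hsum
    have hcast := congrArg (Nat.cast : ℕ → ℤ) hsum
    push_cast at hcast
    have hsum2 : (∑ p ∈ Pt.filter (fun p => p ≤ l), ({P | P ∈ K ∧ P ≤ p}.ncard : ℤ))
        = ∑ p ∈ Pt.filter (fun p => p ≤ l), ((C₃:ℤ) + (dl p : ℤ) * (Q * A)) := by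
      refine Finset.sum_congr rfl (fun T hT => ?_)
      have hT' : finrank F T = 2*(m+2)-1 := by
        have h := (Finset.mem_filter.1 hT).1
        rw [hPt, Set.mem_toFinset] at h
        exact h.2
      exact (hδprop T hT').1
    rw [hsum2, Finset.sum_add_distrib, Finset.sum_const, hlc l hl] at hcast
    rw [(hεprop l hl'.2).1] at hcast
    rw [← Finset.sum_mul] at hcast
    simp only [nsmul_eq_mul] at hcast
    push_cast at hcast ⊢
    linarith [hcast]
  set D₀ : ℤ := ∑ p ∈ Pt.filter (fun p => p ≤ W₀), (dl p : ℤ) with hD₀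
  set N : ℤ := D₀ - q - 1 with hN
  have hlineId : ∀ l ∈ Ln, ∑ p ∈ Pt.filter (fun p => p ≤ l), (dl p : ℤ) = N + q + el l := by
    intro l hl
    have h1 := hkey l hl
    have h2 := hkey W₀ hW₀Ln
    rw [hεW₀] at h2
    have h3 : (Q*A) * ((∑ p ∈ Pt.filter (fun p => p ≤ l), (dl p : ℤ)) - (N + q + el l))
        = (Q*A) * 0 := by
      rw [hN]
      linear_combination h1 - h2
    have := mul_left_cancel₀ hQA h3
    linarith [this]
  -- the point identity
  have hpointId : ∀ p ∈ Pt, ∑ l ∈ Ln.filter (fun l => p ≤ l), el l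
      = Q * ((dl p : ℤ) - 1) := by
    intro p hp
    have hp' := hp
    rw [hPt, Set.mem_toFinset] at hp'
    have hsum := pencil_sum (le_top : p ≤ ⊤)
      (by rw [finrank_top, hdimV, hp'.2]; omega) K hK
    rw [← hpointset p hp, hF] at hsum
    have htop : {P | P ∈ K ∧ P ≤ (⊤ : Submodule F (Fin (2 * (m + 2) + 1) → F))}.ncard = K.ncard := by
      congr 1
      ext P
      simp
    rw [htop] at hsum
    have hcast := congrArg (Nat.cast : ℕ → ℤ) hsum
    push_cast at hcast
    have hsum2 : (∑ l ∈ Ln.filter (fun l => p ≤ l), ({P | P ∈ K ∧ P ≤ l}.ncard : ℤ))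
        = ∑ l ∈ Ln.filter (fun l => p ≤ l), ((H₃:ℤ) + el l * (Q * A)) := by
      refine Finset.sum_congr rfl (fun W hW => ?_)
      have hW' : finrank F W = 2*(m+2) := by
        have h := (Finset.mem_filter.1 hW).1
        rw [hLn, Set.mem_toFinset] at h
        exact h.2
      exact (hεprop W hW').1
    rw [hsum2, Finset.sum_add_distrib, Finset.sum_const, hpc p hp] at hcast
    rw [(hδprop p hp'.2).1] at hcast
    rw [← Finset.sum_mul] at hcast
    simp only [nsmul_eq_mul] at hcast
    have h4 : (Q*A) * ((∑ l ∈ Ln.filter (fun l => p ≤ l), el l) - Q * ((dl p : ℤ) - 1))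
        = (Q*A) * 0 := by
      push_cast at hcast
      linear_combination hcast + eqK
    have := mul_left_cancel₀ hQA h4
    linarith [this]
  -- apply the combinatorial lemma
  have hNcases : N = 0 ∨ N = 1 ∨ N = 2 ∨ N = (q:ℤ) + 1 := by
    refine plane_combinatorics q hq3 Pt Ln (fun a b => a ≤ b) dl ?_ el ?_ N hlc hpc
      hlineId hpointId W₀ hW₀Ln hεW₀
    · intro p hp
      rw [hPt, Set.mem_toFinset] at hp
      exact (hδprop p hp.2).2
    · intro l hl
      rw [hLn, Set.mem_toFinset] at hl
      exact (hεprop l hl.2).2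
  -- the master formula
  have hEm : (((Q*A+1)*(A-1))/(Q-1)) * (Q-1) = (Q*A+1)*(A-1) :=
    Int.ediv_mul_cancel ((dv m).mul_left (Q*A+1))
  have hmaster : ({P | P ∈ K ∧ P ≤ γ}.ncard : ℤ)
      = N * A + ((Q*A+1)*(A-1))/(Q-1) := by
    have h2 := hkey W₀ hW₀Ln
    rw [hεW₀] at h2
    apply mul_left_cancel₀ (show Q * (Q-1) ≠ 0 by positivity)
    rw [hN]
    linear_combination -(Q-1) * h2 + (Q+1) * hC₃m - hH₃m - Q * hEm
  -- conclude
  rw [pw1, pw2]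
  have hgE : ((Q ^ (m + 2 - 1)) + 1) * ((Q ^ (m + 2 - 2)) - 1) / (Q - 1)
      = ((Q*A+1)*(A-1))/(Q-1) := by rw [pw1, pw2]
  rcases hNcases with h | h | h | h
  · exact ⟨0, by simp, by rw [hmaster, h]; push_cast; ring⟩
  · exact ⟨1, by simp, by rw [hmaster, h]; push_cast; ring⟩
  · exact ⟨2, by simp, by rw [hmaster, h]; push_cast; ring⟩
  · exact ⟨q+1, by simp, by rw [hmaster, h]; push_cast; ring⟩
end
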